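/- arXiv:cs/0606053 — 4 statements merged into one kernel-verified Lean document; each statement's English description precedes it below -/
import Mathlib

section
/- For every rational graph G with vertices in Γ* and all rational sets I, F ⊆ Γ* of initial and final vertices, there exist a synchronous rational graph G' (with vertices over the alphabet Γ extended by a fresh symbol #) and rational sets I' and F' such that L(G,I,F) = L(G',I',F'). -/
/-!  Common definitions: transducers, rational graphs, regular languages,
pictures and tiling systems, following Carayol & Meyer,
"Context-Sensitive Languages, Rational Graphs and Determinism". -/

/-- A set of words is regular (rational) if it is recognized by a finite automaton. -/
def Regular {Γ : Type} (L : Set (List Γ)) : Prop :=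
  ∃ (Q : Type) (_ : Fintype Q) (M : DFA Γ Q), M.accepts = L

/-- A finite transducer over the alphabet `Γ`: a finite automaton whose
transitions are labeled by pairs in `(Γ ∪ {ε}) × (Γ ∪ {ε})`,
where `none` encodes the empty word ε. -/
structure Transducer (Γ : Type) where
  /-- states -/
  Q : Type
  /-- the set of states is finite -/
  fintypeQ : Fintype Q
  /-- initial state -/
  init : Q
  /-- final states -/
  final : Set Q
  /-- transition relation -/
  trans : Q → Option Γ × Option Γ → Q → Prop

namespace Transducer

variable {Γ : Type}

/-- Paths in a transducer, recording the list of transition labels. -/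
inductive Path (T : Transducer Γ) : T.Q → List (Option Γ × Option Γ) → T.Q → Prop
  | nil (q : T.Q) : Path T q [] q
  | cons {q q' q'' : T.Q} {l : Option Γ × Option Γ} {ls : List (Option Γ × Option Γ)} :
      T.trans q l q' → Path T q' ls q'' → Path T q (l :: ls) q''

/-- Input word of a list of transition labels (concatenation of first components). -/
def ins (ls : List (Option Γ × Option Γ)) : List Γ := ls.flatMap fun l => l.1.toList

/-- Output word of a list of transition labels (concatenation of second components). -/
def outs (ls : List (Option Γ × Option Γ)) : List Γ := ls.flatMap fun l => l.2.toList

/-- The binary relation on `Γ*` recognized by the transducer: pairs `(u,v)`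
obtained by concatenating componentwise the labels along an accepting run. -/
def Accepts (T : Transducer Γ) (u v : List Γ) : Prop :=
  ∃ (q : T.Q) (ls : List (Option Γ × Option Γ)),
    T.Path T.init ls q ∧ q ∈ T.final ∧ ins ls = u ∧ outs ls = v

/-- A transducer is synchronous if all its transitions are labeled by pairs
of letters of `Γ` (no ε). -/
def Synchronous (T : Transducer Γ) : Prop :=
  ∀ (q q' : T.Q) (l : Option Γ × Option Γ), T.trans q l q' → l.1.isSome ∧ l.2.isSome

/-- A transducer is (left-)synchronized if every path from the initial state
consists of a prefix of transitions labeled by pairs of letters of `Γ`,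
followed by transitions which are all ε on the input side, or all ε on the
output side. -/
def Synchronized (T : Transducer Γ) : Prop :=
  ∀ (q : T.Q) (ls : List (Option Γ × Option Γ)), T.Path T.init ls q →
    ∃ k : ℕ, (∀ l ∈ ls.take k, l.1.isSome ∧ l.2.isSome) ∧
      ((∀ l ∈ ls.drop k, l.1 = none) ∨ (∀ l ∈ ls.drop k, l.2 = none))

/-- A transducer is sequential if for any two transitions from a common state,
either they coincide, or their input letters are distinct letters of `Γ`. -/
def Sequential (T : Transducer Γ) : Prop :=
  ∀ (q q' q'' : T.Q) (x y x' y' : Option Γ),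
    T.trans q (x, y) q' → T.trans q (x', y') q'' →
    (x = x' ∧ y = y' ∧ q' = q'') ∨ (x ≠ none ∧ x' ≠ none ∧ x ≠ x')

/-- A transducer is deterministic if no two distinct transitions from the same
state carry the same label. -/
def Deterministic (T : Transducer Γ) : Prop :=
  ∀ (q q' q'' : T.Q) (l : Option Γ × Option Γ),
    T.trans q l q' → T.trans q l q'' → q' = q''

end Transducer

/-- A rational graph labeled by the alphabet `A` with vertices in `Γ*`,
given by one transducer over `Γ` per label. -/
structure RationalGraph (A Γ : Type) where
  /-- the transducer defining the edges labeled by a given letter -/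
  trans : A → Transducer Γ

namespace RationalGraph

variable {A Γ : Type}

/-- There is an edge `u →a v` iff `(u,v)` is recognized by the transducer `T_a`. -/
def Edge (G : RationalGraph A Γ) (u : List Γ) (a : A) (v : List Γ) : Prop :=
  (G.trans a).Accepts u v

/-- A synchronous rational graph is defined by synchronous transducers. -/
def Synchronous (G : RationalGraph A Γ) : Prop := ∀ a : A, (G.trans a).Synchronous

/-- A synchronized rational graph is defined by synchronized transducers. -/
def Synchronized (G : RationalGraph A Γ) : Prop := ∀ a : A, (G.trans a).Synchronized

/-- A sequential rational graph is defined by sequential transducers. -/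
def Sequential (G : RationalGraph A Γ) : Prop := ∀ a : A, (G.trans a).Sequential

/-- `vs` is the sequence of vertices of a path labeled by the word `w`. -/
def IsPath (G : RationalGraph A Γ) (vs : List (List Γ)) (w : List A) : Prop :=
  vs.length = w.length + 1 ∧
  ∀ (k : ℕ) (a : A) (u v : List Γ),
    w[k]? = some a → vs[k]? = some u → vs[k + 1]? = some v → G.Edge u a v

/-- The path language of `G` between the sets of vertices `I` and `F`:
all words labeling a path from a vertex of `I` to a vertex of `F`. -/
def Lang (G : RationalGraph A Γ) (I F : Set (List Γ)) : Set (List A) :=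
  { w | ∃ (vs : List (List Γ)) (i f : List Γ), G.IsPath vs w ∧
      vs.head? = some i ∧ i ∈ I ∧ vs.getLast? = some f ∧ f ∈ F }

/-- A graph has finite out-degree if every vertex has finitely many outgoing edges. -/
def FiniteOutDegree (G : RationalGraph A Γ) : Prop :=
  ∀ u : List Γ, { p : A × List Γ | G.Edge u p.1 p.2 }.Finite

/-- The out-degree of a vertex: the number of its outgoing edges. -/
noncomputable def outDegree (G : RationalGraph A Γ) (u : List Γ) : ℕ :=
  { p : A × List Γ | G.Edge u p.1 p.2 }.ncard

/-- Two vertices are adjacent if some edge (in either direction, ignoring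
labels) connects them. -/
def Adj (G : RationalGraph A Γ) (u v : List Γ) : Prop :=
  (∃ a, G.Edge u a v) ∨ (∃ a, G.Edge v a u)

end RationalGraph

/-- `chainN R n u v` holds iff there is a sequence of `n` `R`-steps from `u` to `v`. -/
def chainN {α : Type} (R : α → α → Prop) : ℕ → α → α → Prop
  | 0, u, v => u = v
  | n + 1, u, w => ∃ v, R u v ∧ chainN R n v w

/-- `IsDist R x v n` : the length of a shortest `R`-sequence from `x` to `v` is `n`. -/
def IsDist {α : Type} (R : α → α → Prop) (x v : α) (n : ℕ) : Prop :=
  chainN R n x v ∧ ∀ m : ℕ, chainN R m x v → n ≤ m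

/-- A 2×2 tile over the alphabet `Λ`. -/
structure Tile (Λ : Type) where
  /-- top-left letter -/
  tl : Λ
  /-- top-right letter -/
  tr : Λ
  /-- bottom-left letter -/
  bl : Λ
  /-- bottom-right letter -/
  br : Λ

/-- The set of 2×2 tiles appearing in a picture given as a list of rows. -/
def tilesOf {Λ : Type} (rows : List (List Λ)) : Set (Tile Λ) :=
  { t | ∃ (i j : ℕ) (r₁ r₂ : List Λ), rows[i]? = some r₁ ∧ rows[i + 1]? = some r₂ ∧
      r₁[j]? = some t.tl ∧ r₁[j + 1]? = some t.tr ∧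
      r₂[j]? = some t.bl ∧ r₂[j + 1]? = some t.br }

/-- The picture of width `m` framed by the border symbol `#` (encoded by `none`). -/
def framed {Λ : Type} (rows : List (List Λ)) (m : ℕ) : List (List (Option Λ)) :=
  List.replicate (m + 2) none ::
    (rows.map fun r => none :: (r.map some ++ [none])) ++
      [List.replicate (m + 2) none]

/-- A tiling system with input alphabet `A` and work alphabet `Λ`
(the frame symbol `#` is encoded by `none : Option Λ`). -/
structure TilingSystem (A Λ : Type) where
  /-- the embedding of the input alphabet into the work alphabet -/
  emb : A → Λ
  /-- the input alphabet is a sub-alphabet of the work alphabet -/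
  emb_inj : Function.Injective emb
  /-- the (finite, as `Λ` is finite) set of allowed tiles over `Λ ∪ {#}` -/
  tiles : Set (Tile (Option Λ))

namespace TilingSystem

variable {A Λ : Type}

/-- `S.Pic rows n m` : `rows` is an `(n,m)`-picture of the picture language of `S`,
i.e. all 2×2 tiles of the framed picture belong to the tiles of `S`. -/
def Pic (S : TilingSystem A Λ) (rows : List (List Λ)) (n m : ℕ) : Prop :=
  0 < n ∧ 0 < m ∧ rows.length = n ∧ (∀ r ∈ rows, r.length = m) ∧
    tilesOf (framed rows m) ⊆ S.tiles

/-- The word language of a tiling system: frontiers (first rows) of accepted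
pictures that are words over the input alphabet. -/
def Lang (S : TilingSystem A Λ) : Set (List A) :=
  { w | ∃ (rows : List (List Λ)) (n : ℕ),
      S.Pic rows n w.length ∧ rows.head? = some (w.map S.emb) }

/-- A tiling system is deterministic if each row determines at most one
possible next row. -/
def Deterministic (S : TilingSystem A Λ) : Prop :=
  ∀ u v v' : List (Option Λ), v.length = u.length → v'.length = u.length →
    tilesOf [none :: u ++ [none], none :: v ++ [none]] ⊆ S.tiles →
    tilesOf [none :: u ++ [none], none :: v' ++ [none]] ⊆ S.tiles → v = v'

end TilingSystem
section Aux
open List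

variable {α : Type} {Γ : Type} {A : Type}

/-- letters at even indices -/
def evensL : List α → List α
  | [] => []
  | [a] => [a]
  | a :: _ :: l => a :: evensL l

/-- letters at odd indices -/
def oddsL : List α → List α
  | [] => []
  | [_] => []
  | _ :: b :: l => b :: oddsL l

/-- interleave two lists (truncating to common length) -/
def il (x y : List α) : List α := (x.zip y).flatMap fun p => [p.1, p.2]

@[simp] lemma il_nil_left (y : List α) : il [] y = [] := rfl
@[simp] lemma il_nil_right (x : List α) : il x [] = [] := by cases x <;> rfl
@[simp] lemma il_cons (a b : α) (x y : List α) :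
    il (a :: x) (b :: y) = a :: b :: il x y := rfl

lemma evensL_il (x y : List α) (h : x.length = y.length) : evensL (il x y) = x := by
  induction x generalizing y with
  | nil => simp [evensL]
  | cons a x ih =>
    cases y with
    | nil => simp at h
    | cons b y => rw [il_cons]; show a :: evensL (il x y) = _; rw [ih y (by simpa using h)]

lemma oddsL_il (x y : List α) (h : x.length = y.length) : oddsL (il x y) = y := by
  induction x generalizing y with
  | nil => cases y with | nil => simp [oddsL] | cons b y => simp at h
  | cons a x ih =>
    cases y with
    | nil => simp at h
    | cons b y => rw [il_cons]; show b :: oddsL (il x y) = _; rw [ih y (by simpa using h)]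

lemma reduceOption_eq_nil {d : List (Option α)} (h : ∀ x ∈ d, x = none) :
    d.reduceOption = [] := by
  induction d with
  | nil => rfl
  | cons a d ih =>
    have := h a (by simp)
    subst this
    simp [List.reduceOption_cons_of_none, ih fun x hx => h x (by simp [hx])]

lemma reduceOption_cons_split {d : List (Option α)} {b : α} {t : List α}
    (h : d.reduceOption = b :: t) :
    ∃ n₀ d'', d = n₀ ++ some b :: d'' ∧ (∀ x ∈ n₀, x = (none : Option α)) ∧
      d''.reduceOption = t := by
  induction d with
  | nil => simp [List.reduceOption] at h
  | cons a d ih =>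
    cases a with
    | none =>
      rw [List.reduceOption_cons_of_none] at h
      obtain ⟨n₀, d'', h1, h2, h3⟩ := ih h
      exact ⟨none :: n₀, d'', by simp [h1], by simpa using h2, h3⟩
    | some c =>
      rw [List.reduceOption_cons_of_some] at h
      obtain ⟨rfl, rfl⟩ := List.cons_eq_cons.mp h
      exact ⟨[], d, rfl, by simp, rfl⟩

end Aux

section Aux1b
variable {α β : Type}

lemma reduceOption_map_some' (l : List α) : (l.map some).reduceOption = l := by
  induction l with
  | nil => rfl
  | cons a l ih => simp [List.reduceOption_cons_of_some, ih]

lemma getLast?_map' (f : α → β) (l : List α) :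
    (l.map f).getLast? = l.getLast?.map f := by
  induction l with
  | nil => rfl
  | cons a l ih =>
    cases l with
    | nil => rfl
    | cons b t =>
      rw [List.map_cons, List.map_cons, List.getLast?_cons_cons, List.getLast?_cons_cons,
        ← List.map_cons]
      exact ih

lemma mem_of_getLast?' {l : List α} {a : α} (h : l.getLast? = some a) : a ∈ l := by
  induction l with
  | nil => simp at h
  | cons b t ih =>
    cases t with
    | nil => simp_all
    | cons c t' =>
      rw [List.getLast?_cons_cons] at h
      exact List.mem_cons_of_mem _ (ih h)

end Aux1b
section Aux2
open List

variable {Γ : Type} {A : Type}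

namespace Transducer

lemma ins_append (ls ls' : List (Option Γ × Option Γ)) :
    ins (ls ++ ls') = ins ls ++ ins ls' := by simp [ins]

lemma outs_append (ls ls' : List (Option Γ × Option Γ)) :
    outs (ls ++ ls') = outs ls ++ outs ls' := by simp [outs]

@[simp] lemma ins_nil : ins ([] : List (Option Γ × Option Γ)) = [] := rfl
@[simp] lemma outs_nil : outs ([] : List (Option Γ × Option Γ)) = [] := rfl
@[simp] lemma ins_cons (l : Option Γ × Option Γ) (ls) :
    ins (l :: ls) = l.1.toList ++ ins ls := rfl
@[simp] lemma outs_cons (l : Option Γ × Option Γ) (ls) :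
    outs (l :: ls) = l.2.toList ++ outs ls := rfl

lemma Path.append {T : Transducer Γ} {q q' q'' : T.Q} {ls ls'} :
    T.Path q ls q' → T.Path q' ls' q'' → T.Path q (ls ++ ls') q'' := by
  intro h1 h2
  induction h1 with
  | nil => exact h2
  | cons ht _ ih => exact Path.cons ht (ih h2)

/-- closure of ε/ε-transitions -/
def Clos (T : Transducer Γ) (q q' : T.Q) : Prop :=
  ∃ ls, T.Path q ls q' ∧ ins ls = [] ∧ outs ls = []

lemma Clos.refl (T : Transducer Γ) (q : T.Q) : T.Clos q q :=
  ⟨[], Path.nil q, rfl, rfl⟩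

end Transducer

/-- remove ε/ε (pad) labels from a label list -/
def strip : List (Option Γ × Option Γ) → List (Option Γ × Option Γ)
  | [] => []
  | (none, none) :: t => strip t
  | (some a, b) :: t => (some a, b) :: strip t
  | (none, some b) :: t => (none, some b) :: strip t

@[simp] lemma strip_nil : strip ([] : List (Option Γ × Option Γ)) = [] := rfl
@[simp] lemma strip_pad (t : List (Option Γ × Option Γ)) :
    strip ((none, none) :: t) = strip t := rfl

lemma strip_cons_ne {l : Option Γ × Option Γ} (t : List (Option Γ × Option Γ))
    (h : l ≠ (none, none)) : strip (l :: t) = l :: strip t := by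
  obtain ⟨o1, o2⟩ := l
  cases o1 with
  | some a => rfl
  | none => cases o2 with
    | some b => rfl
    | none => exact absurd rfl h

namespace RationalGraph

/-- a walk in a rational graph -/
inductive Walk (G : RationalGraph A Γ) : List Γ → List A → List Γ → Prop
  | nil (u : List Γ) : Walk G u [] u
  | cons {u u' v : List Γ} {a : A} {w : List A} :
      G.Edge u a u' → Walk G u' w v → Walk G u (a :: w) v

lemma isPath_shift {G : RationalGraph A Γ} {x : List Γ} {vs : List (List Γ)}
    {a : A} {w : List A} (h : G.IsPath (x :: vs) (a :: w)) : G.IsPath vs w := by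
  obtain ⟨hlen, hedge⟩ := h
  refine ⟨by simpa using hlen, fun k b u v hk hu hv => ?_⟩
  exact hedge (k + 1) b u v (by simpa using hk) (by simpa using hu) (by simpa using hv)

lemma lang_iff_walk (G : RationalGraph A Γ) (I F : Set (List Γ)) (w : List A) :
    w ∈ G.Lang I F ↔ ∃ u v, u ∈ I ∧ v ∈ F ∧ G.Walk u w v := by
  constructor
  · rintro ⟨vs, i, f, hp, hh, hi, hl, hf⟩
    refine ⟨i, f, hi, hf, ?_⟩
    clear hi hf
    induction w generalizing vs i f with
    | nil =>
      obtain ⟨hlen, _⟩ := hp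
      match vs, hlen with
      | [x], _ =>
        simp only [head?_cons, Option.some.injEq] at hh
        simp only [getLast?_singleton, Option.some.injEq] at hl
        subst hh; subst hl
        exact Walk.nil _
    | cons a w ih =>
      obtain ⟨hlen, hedge⟩ := hp
      match vs, hlen with
      | x :: y :: vs', hlen =>
        simp only [head?_cons, Option.some.injEq] at hh
        subst hh
        have he : G.Edge x a y := hedge 0 a x y (by simp) (by simp) (by simp)
        have hw : G.Walk y w f := by
          refine ih (y :: vs') y f (isPath_shift ⟨hlen, hedge⟩) rfl ?_
          rwa [List.getLast?_cons_cons] at hl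
        exact Walk.cons he hw
  · rintro ⟨u, v, hu, hv, hw⟩
    suffices h : ∃ vs, G.IsPath vs w ∧ vs.head? = some u ∧ vs.getLast? = some v by
      obtain ⟨vs, hp, hh, hl⟩ := h
      exact ⟨vs, u, v, hp, hh, hu, hl, hv⟩
    clear hu hv
    induction hw with
    | nil x =>
      exact ⟨[x], ⟨rfl, fun k a u' v' hk => by simp at hk⟩, rfl, rfl⟩
    | @cons x x' y a w' he _ ih =>
      obtain ⟨vs, ⟨hlen, hedge⟩, hh, hl⟩ := ih
      match vs, hh, hl, hlen, hedge with
      | z :: vs', hh, hl, hlen, hedge =>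
        have hz : z = x' := by simpa using hh
        subst hz
        refine ⟨x :: z :: vs', ⟨by simpa using hlen, ?_⟩, rfl, by
          rwa [List.getLast?_cons_cons]⟩
        rintro (_ | k) b u' v' hk hu' hv'
        · simp only [List.getElem?_cons_zero, Option.some.injEq] at hk hu'
          simp only [List.getElem?_cons_succ, List.getElem?_cons_zero,
            Option.some.injEq] at hv'
          subst hk; subst hu'; subst hv'; exact he
        · exact hedge k b u' v' (by simpa using hk) (by simpa using hu')
            (by simpa using hv')
end RationalGraph
end Aux2
section Aux3
open List Transducer

variable {Γ : Type}

/-- spread a list according to a boolean mask: `true` positions take the next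
letter of the list, `false` positions are `none`. -/
def pad0 : List Bool → List (Option Γ) → List (Option Γ)
  | [], _ => []
  | false :: m, l => none :: pad0 m l
  | true :: m, [] => none :: pad0 m []
  | true :: m, x :: l => x :: pad0 m l

@[simp] lemma pad0_nil (l : List (Option Γ)) : pad0 [] l = [] := rfl
@[simp] lemma pad0_false (m : List Bool) (l : List (Option Γ)) :
    pad0 (false :: m) l = none :: pad0 m l := rfl
@[simp] lemma pad0_true_cons (m : List Bool) (x : Option Γ) (l : List (Option Γ)) :
    pad0 (true :: m) (x :: l) = x :: pad0 m l := rfl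

lemma length_pad0 (m : List Bool) (l : List (Option Γ)) :
    (pad0 m l).length = m.length := by
  induction m generalizing l with
  | nil => rfl
  | cons b m ih =>
    cases b with
    | false => simp [ih]
    | true => cases l with
      | nil => show (none :: pad0 m []).length = _; simp [ih]
      | cons x l => simp [ih]

lemma reduceOption_pad0 (m : List Bool) (l : List (Option Γ))
    (h : m.count true = l.length) : (pad0 m l).reduceOption = l.reduceOption := by
  induction m generalizing l with
  | nil =>
    simp only [List.count_nil] at h
    cases l with
    | nil => rfl
    | cons x l => simp at h
  | cons b m ih =>
    cases b with
    | false =>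
      rw [pad0_false, List.reduceOption_cons_of_none, ih]
      simpa using h
    | true =>
      cases l with
      | nil => simp at h
      | cons x l =>
        rw [pad0_true_cons]
        have h' : m.count true = l.length := by
          have := h; simp [List.count_cons] at this; omega
        cases x with
        | none => rw [List.reduceOption_cons_of_none, List.reduceOption_cons_of_none, ih _ h']
        | some c => rw [List.reduceOption_cons_of_some, List.reduceOption_cons_of_some, ih _ h']

lemma pad0_trues (l : List (Option Γ)) : pad0 (List.replicate l.length true) l = l := by
  induction l with
  | nil => rfl
  | cons x l ih => simp only [List.length_cons, List.replicate_succ, pad0_true_cons, ih]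

lemma pad0_append_trues (l₁ l₂ : List (Option Γ)) (m : List Bool) :
    pad0 (List.replicate l₁.length true ++ m) (l₁ ++ l₂) = l₁ ++ pad0 m l₂ := by
  induction l₁ with
  | nil => rfl
  | cons x l ih => simp only [List.length_cons, List.replicate_succ, List.cons_append,
      pad0_true_cons, ih]

lemma strip_eq_nil {ls : List (Option Γ × Option Γ)}
    (h : ∀ l ∈ ls, l = (none, none)) : strip ls = [] := by
  induction ls with
  | nil => rfl
  | cons l t ih =>
    have := h l (by simp)
    subst this
    exact (strip_pad t) ▸ ih fun x hx => h x (by simp [hx])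

lemma strip_append (xs ys : List (Option Γ × Option Γ)) :
    strip (xs ++ ys) = strip xs ++ strip ys := by
  induction xs with
  | nil => rfl
  | cons l t ih =>
    by_cases hl : l = ((none : Option Γ), (none : Option Γ))
    · subst hl; simpa using ih
    · rw [List.cons_append, strip_cons_ne _ hl, strip_cons_ne _ hl, ih, List.cons_append]

lemma maskzip (m : List Bool) (x y : List (Option Γ))
    (hx : m.count true = x.length) (hxy : x.length = y.length) :
    strip ((pad0 m x).zip (pad0 m y)) = strip (x.zip y) := by
  induction m generalizing x y with
  | nil =>
    simp only [List.count_nil] at hx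
    cases x with
    | nil => simp
    | cons a x => simp at hx
  | cons b m ih =>
    cases b with
    | false =>
      rw [pad0_false, pad0_false, List.zip_cons_cons, strip_pad]
      exact ih x y (by simpa using hx) hxy
    | true =>
      cases x with
      | nil => simp at hx
      | cons a x =>
        cases y with
        | nil => simp at hxy
        | cons c y =>
          rw [pad0_true_cons, pad0_true_cons, List.zip_cons_cons, List.zip_cons_cons]
          have h' : m.count true = x.length := by
            have := hx; simp [List.count_cons] at this; omega
          have h'' : x.length = y.length := by simpa using hxy
          by_cases hl : (a, c) = ((none : Option Γ), (none : Option Γ))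
          · rw [hl, strip_pad, strip_pad, ih x y h' h'']
          · rw [strip_cons_ne _ hl, strip_cons_ne _ hl, ih x y h' h'']

/-- the key per-edge spreading lemma -/
lemma core : ∀ (ls : List (Option Γ × Option Γ)) (d' : List (Option Γ)),
    d'.reduceOption = outs ls →
    ∃ (m : List Bool) (d : List (Option Γ)),
      m.count true = d'.length ∧ d.length = m.length ∧
      d.reduceOption = ins ls ∧
      strip (d.zip (pad0 m d')) = strip ls := by
  intro ls
  induction ls with
  | nil =>
    intro d' hd'
    refine ⟨List.replicate d'.length true, List.replicate d'.length none,
      by simp, by simp, ?_, ?_⟩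
    · show (List.replicate d'.length (none : Option Γ)).reduceOption = _
      rw [reduceOption_eq_nil (fun x hx => List.eq_of_mem_replicate hx)]; rfl
    · rw [pad0_trues, strip_nil]
      refine strip_eq_nil fun l hl => ?_
      obtain ⟨h1, h2⟩ := List.of_mem_zip hl
      have hx1 := List.eq_of_mem_replicate h1
      have hx2 : l.2 = none := by
        have : ∀ x ∈ d', x = none := by
          intro x hx
          by_contra hxn
          cases x with
          | none => exact hxn rfl
          | some c =>
            have hcc : c ∈ d'.reduceOption := List.reduceOption_mem_iff.mpr hx
            rw [hd'] at hcc
            simp [outs] at hcc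
        exact this _ h2
      exact Prod.ext hx1 hx2
  | cons l rest ih =>
    obtain ⟨o1, o2⟩ := l
    cases o2 with
    | some b =>
      intro d' hd'
      rw [outs_cons] at hd'
      simp only [Option.toList_some, List.singleton_append] at hd'
      obtain ⟨n₀, d'', rfl, hn₀, hd''⟩ := reduceOption_cons_split hd'
      obtain ⟨m', d₀, hc, hlen, hins, hstrip⟩ := ih d'' hd''
      refine ⟨List.replicate n₀.length true ++ true :: m', List.replicate n₀.length none ++ o1 :: d₀,
        ?_, by simp [hlen], ?_, ?_⟩
      · simp [List.count_append, List.count_cons, hc]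
      · rw [List.reduceOption_append, reduceOption_eq_nil
          (fun x hx => List.eq_of_mem_replicate hx)]
        cases o1 with
        | none => simp [hins]
        | some a => simp [hins]
      · have hpp : pad0 (List.replicate n₀.length true ++ true :: m') (n₀ ++ some b :: d'') =
            n₀ ++ some b :: pad0 m' d'' := by
          have := pad0_append_trues n₀ (some b :: d'') (true :: m')
          rw [this]; rfl
        rw [hpp, List.zip_append (by simp), List.zip_cons_cons, strip_append,
          strip_eq_nil (Γ := Γ) (ls := (List.replicate n₀.length none).zip n₀) ?_,
          strip_cons_ne _ (by simp), List.nil_append,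
          strip_cons_ne _ (by simp), hstrip]
        intro x hx
        obtain ⟨h1, h2⟩ := List.of_mem_zip hx
        exact Prod.ext (List.eq_of_mem_replicate h1) (hn₀ _ h2)
    | none =>
      cases o1 with
      | some a =>
        intro d' hd'
        rw [outs_cons] at hd'
        simp only [Option.toList_none, List.nil_append] at hd'
        obtain ⟨m', d₀, hc, hlen, hins, hstrip⟩ := ih d' hd'
        refine ⟨false :: m', some a :: d₀, by simpa using hc, by simp [hlen], ?_, ?_⟩
        · simp [hins]
        · rw [pad0_false, List.zip_cons_cons, strip_cons_ne _ (by simp),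
            strip_cons_ne _ (by simp), hstrip]
      | none =>
        intro d' hd'
        rw [outs_cons] at hd'
        simp only [Option.toList_none, List.nil_append] at hd'
        obtain ⟨m', d₀, hc, hlen, hins, hstrip⟩ := ih d' hd'
        exact ⟨m', d₀, hc, hlen, by simpa using hins, by rw [hstrip, strip_pad]⟩

end Aux3
section Aux4
open List Transducer

variable {Γ : Type}

/-- runs chained by matching outputs to inputs -/
def Chained : List (List (Option Γ × Option Γ)) → List Γ → List Γ → Prop
  | [], u, v => u = v
  | ls :: rest, u, v => ins ls = u ∧ Chained rest (outs ls) v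

lemma forall₂_imp_mem {α β : Type} {R S : α → β → Prop} :
    ∀ {l : List α} {l' : List β}, List.Forall₂ R l l' →
    (∀ a ∈ l, ∀ b ∈ l', R a b → S a b) → List.Forall₂ S l l' := by
  intro l l' h
  induction h with
  | nil => intro _; exact List.Forall₂.nil
  | cons hr _ ih =>
    intro H
    exact List.Forall₂.cons (H _ (by simp) _ (by simp) hr)
      (ih fun a ha b hb hr' => H a (by simp [ha]) b (by simp [hb]) hr')

lemma thread : ∀ (runs : List (List (Option Γ × Option Γ))) (u v : List Γ),
    Chained runs u v →
    ∃ (N : ℕ) (ds : List (List (Option Γ))),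
      ds.length = runs.length + 1 ∧ (∀ d ∈ ds, d.length = N) ∧
      (∃ e t, ds = e :: t ∧ e.reduceOption = u) ∧
      (∃ f, ds.getLast? = some f ∧ f.reduceOption = v) ∧
      List.Forall₂ (fun p ls => strip (p.1.zip p.2) = strip ls) (ds.zip ds.tail) runs := by
  intro runs
  induction runs with
  | nil =>
    intro u v h
    refine ⟨u.length, [u.map some], by simp, by simp, ⟨u.map some, [], rfl, by
      simp [reduceOption_map_some']⟩, ⟨u.map some, by simp, by
      rw [reduceOption_map_some']; exact h⟩, by simp⟩
  | cons ls rest ih =>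
    rintro u v ⟨hin, hch⟩
    obtain ⟨N', ds', hlen', hall', ⟨e, t, rfl, he⟩, ⟨f, hf, hfv⟩, hF⟩ := ih (outs ls) v hch
    obtain ⟨m, d, hcm, hdm, hdins, hdstrip⟩ := core ls e he
    have heN : e.length = N' := hall' e (by simp)
    refine ⟨m.length, d :: (e :: t).map (pad0 m), by simpa using hlen', ?_, 
      ⟨d, _, rfl, hdins.trans hin⟩, ?_, ?_⟩
    · intro x hx
      rcases List.mem_cons.mp hx with rfl | hx
      · exact hdm
      · obtain ⟨y, _, rfl⟩ := List.mem_map.mp hx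
        exact length_pad0 m y
    · refine ⟨pad0 m f, ?_, ?_⟩
      · rw [List.map_cons, List.getLast?_cons_cons, ← List.map_cons, getLast?_map', hf]
        rfl
      · rw [reduceOption_pad0, hfv]
        rw [hcm, heN]
        have : f ∈ e :: t := mem_of_getLast?' hf
        exact (hall' f this).symm
    · have htl : ((e :: t).map (pad0 m)).tail = t.map (pad0 m) := by simp
      have hzz : (d :: (e :: t).map (pad0 m)).zip ((d :: (e :: t).map (pad0 m)).tail)
          = (d, pad0 m e) :: ((e :: t).map (pad0 m)).zip (t.map (pad0 m)) := by
        simp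
      rw [hzz]
      refine List.Forall₂.cons (by rw [hdstrip]) ?_
      have : ((e :: t).map (pad0 m)).zip (t.map (pad0 m))
          = ((e :: t).zip t).map (Prod.map (pad0 m) (pad0 m)) := by
        rw [List.zip_map]
      rw [this]
      rw [List.forall₂_map_left_iff]
      have htail : (e :: t).tail = t := rfl
      rw [htail] at hF
      have himp : ∀ (p : List (Option Γ) × List (Option Γ)), p ∈ (e :: t).zip t →
          ∀ (lsr : List (Option Γ × Option Γ)),
          strip (p.1.zip p.2) = strip lsr →
          strip ((pad0 m p.1).zip (pad0 m p.2)) = strip lsr := by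
        intro p hp lsr hs
        obtain ⟨h1, h2⟩ := List.of_mem_zip hp
        have hl1 : p.1.length = N' := hall' _ h1
        have hl2 : p.2.length = N' := hall' _ (List.mem_cons_of_mem _ h2)
        rw [maskzip m p.1 p.2 (by rw [hcm, heN, hl1]) (by rw [hl1, hl2]), hs]
      refine forall₂_imp_mem hF ?_
      intro p hp lsr _ hs
      exact himp p hp lsr hs
end Aux4
section Aux5
open List Transducer

variable {Γ : Type} [Fintype Γ]
set_option linter.unusedSectionVars false

lemma strip_eq_nil_pads {ls : List (Option Γ × Option Γ)} (h : strip ls = []) :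
    ins ls = [] ∧ outs ls = [] := by
  induction ls with
  | nil => exact ⟨rfl, rfl⟩
  | cons l t ih =>
    by_cases hl : l = ((none : Option Γ), (none : Option Γ))
    · subst hl
      rw [strip_pad] at h
      obtain ⟨h1, h2⟩ := ih h
      simp [h1, h2]
    · rw [strip_cons_ne _ hl] at h
      simp at h

lemma strip_split {ls s : List (Option Γ × Option Γ)} {l : Option Γ × Option Γ}
    (h : strip ls = l :: s) :
    ∃ ls₁ ls₂, ls = ls₁ ++ l :: ls₂ ∧ strip ls₁ = [] ∧ strip ls₂ = s := by
  induction ls with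
  | nil => simp at h
  | cons x t ih =>
    by_cases hx : x = ((none : Option Γ), (none : Option Γ))
    · subst hx
      rw [strip_pad] at h
      obtain ⟨ls₁, ls₂, rfl, h1, h2⟩ := ih h
      exact ⟨(none, none) :: ls₁, ls₂, rfl, by rwa [strip_pad], h2⟩
    · rw [strip_cons_ne _ hx] at h
      obtain ⟨rfl, rfl⟩ := List.cons_eq_cons.mp h
      exact ⟨[], t, rfl, rfl, rfl⟩

lemma path_cons_inv {T : Transducer Γ} {q q' : T.Q} {l : Option Γ × Option Γ} {ls}
    (h : T.Path q (l :: ls) q') : ∃ qm, T.trans q l qm ∧ T.Path qm ls q' := by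
  cases h with
  | cons ht hp => exact ⟨_, ht, hp⟩

lemma path_nil_inv {T : Transducer Γ} {q q' : T.Q}
    (h : T.Path q [] q') : q = q' := by
  cases h with
  | nil => rfl

lemma path_append_split {T : Transducer Γ} :
    ∀ {ls₁ ls₂ : List (Option Γ × Option Γ)} {q q' : T.Q},
    T.Path q (ls₁ ++ ls₂) q' → ∃ qm, T.Path q ls₁ qm ∧ T.Path qm ls₂ q' := by
  intro ls₁
  induction ls₁ with
  | nil => exact fun h => ⟨_, Transducer.Path.nil _, h⟩
  | cons l t ih =>
    intro ls₂ q q' h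
    obtain ⟨qm, ht, hp⟩ := path_cons_inv h
    obtain ⟨qf, hp1, hp2⟩ := ih hp
    exact ⟨qf, Transducer.Path.cons ht hp1, hp2⟩

/-- the letter-to-letter transducer simulating `T` on spread-out encodings -/
def syncT (T : Transducer Γ) : Transducer (Option Γ) where
  Q := T.Q × Option (Option Γ)
  fintypeQ := by haveI := T.fintypeQ; infer_instance
  init := (T.init, none)
  final := { p | p.2 = none ∧ ∃ q', T.Clos p.1 q' ∧ q' ∈ T.final }
  trans := fun p l p' =>
    match p.2 with
    | none => ∃ bb, l.1.isSome ∧ l.2 = some bb ∧ p'.1 = p.1 ∧ p'.2 = some bb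
    | some d => l.1 = some d ∧ ∃ bb, l.2 = some bb ∧ p'.2 = none ∧
        ((d = none ∧ bb = none ∧ p'.1 = p.1) ∨
         (¬(d = none ∧ bb = none) ∧ ∃ q1, T.Clos p.1 q1 ∧ T.trans q1 (d, bb) p'.1))

lemma syncT_synchronous (T : Transducer Γ) : (syncT T).Synchronous := by
  rintro ⟨q, ph⟩ q' l h
  cases ph with
  | none => obtain ⟨bb, h1, h2, _⟩ := h; exact ⟨h1, by simp [h2]⟩
  | some d => obtain ⟨h1, bb, h2, _⟩ := h; exact ⟨by simp [h1], by simp [h2]⟩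

lemma syncT_fwd (T : Transducer Γ) :
    ∀ (e f d : List (Option Γ)) (ls : List (Option Γ × Option Γ)) (q q' : T.Q),
    d.length = e.length → e.length = f.length →
    strip (e.zip f) = strip ls → T.Path q ls q' →
    ∃ (ls' : List (Option (Option Γ) × Option (Option Γ))) (q2 : T.Q),
      (syncT T).Path (q, none) ls' (q2, none) ∧ T.Clos q2 q' ∧
      ins ls' = il d e ∧ outs ls' = il e f := by
  intro e
  induction e with
  | nil =>
    intro f d ls q q' hde hef hs hp
    match d, f, hde, hef with
    | [], [], _, _ =>
      simp only [List.zip_nil_left, strip_nil] at hs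
      obtain ⟨h1, h2⟩ := strip_eq_nil_pads hs.symm
      exact ⟨[], q, Transducer.Path.nil _, ⟨ls, hp, h1, h2⟩, rfl, rfl⟩
  | cons e0 e ih =>
    intro f d ls q q' hde hef hs hp
    match d, f, hde, hef with
    | d0 :: d, f0 :: f, hde, hef =>
      by_cases hcell : (e0, f0) = ((none : Option Γ), (none : Option Γ))
      · have he0 : e0 = none := congrArg Prod.fst hcell
        have hf0 : f0 = none := congrArg Prod.snd hcell
        rw [List.zip_cons_cons, hcell, strip_pad] at hs
        obtain ⟨ls', q2, hp', hclos, hins, houts⟩ :=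
          ih f d ls q q' (by simpa using hde) (by simpa using hef) hs hp
        refine ⟨(some d0, some e0) :: (some e0, some f0) :: ls', q2, ?_, hclos, ?_, ?_⟩
        · refine Transducer.Path.cons (q' := (q, some e0)) ⟨e0, by simp, rfl, rfl, rfl⟩
            (Transducer.Path.cons (q' := (q, none)) ?_ hp')
          subst he0; subst hf0
          exact ⟨rfl, none, rfl, rfl, Or.inl ⟨rfl, rfl, rfl⟩⟩
        · simp [hins]
        · simp [houts]
      · rw [List.zip_cons_cons, strip_cons_ne _ hcell] at hs
        obtain ⟨ls₁, ls₂, rfl, hpad, hs₂⟩ := strip_split hs.symm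
        obtain ⟨q1, hp1, hp2⟩ := path_append_split hp
        obtain ⟨q2, ht, hp3⟩ := path_cons_inv hp2
        obtain ⟨ls', q3, hp', hclos, hins, houts⟩ :=
          ih f d ls₂ q2 q' (by simpa using hde) (by simpa using hef) hs₂.symm hp3
        refine ⟨(some d0, some e0) :: (some e0, some f0) :: ls', q3, ?_, hclos, ?_, ?_⟩
        · refine Transducer.Path.cons (q' := (q, some e0)) ⟨e0, by simp, rfl, rfl, rfl⟩
            (Transducer.Path.cons (q' := (q2, none)) ?_ hp')
          refine ⟨rfl, f0, rfl, rfl, Or.inr ⟨?_, q1, ⟨ls₁, hp1, (strip_eq_nil_pads hpad).1,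
              (strip_eq_nil_pads hpad).2⟩, ht⟩⟩
          intro ⟨h1, h2⟩
          exact hcell (by rw [h1, h2])
        · simp [hins]
        · simp [houts]

lemma reduceOption_cons' (x : Option Γ) (l : List (Option Γ)) :
    (x :: l).reduceOption = x.toList ++ l.reduceOption := by
  cases x with
  | none => simp [List.reduceOption_cons_of_none]
  | some c => simp [List.reduceOption_cons_of_some]

lemma syncT_rev (T : Transducer Γ) :
    ∀ (n : ℕ) (ls' : List (Option (Option Γ) × Option (Option Γ))) (q p : T.Q),
    ls'.length = n → (syncT T).Path (q, none) ls' (p, none) →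
    ∃ ls, T.Path q ls p ∧ ins ls = (evensL (outs ls')).reduceOption ∧
      outs ls = (oddsL (outs ls')).reduceOption ∧
      evensL (outs ls') = oddsL (ins ls') := by
  intro n
  induction n using Nat.strong_induction_on with
  | _ n IH =>
    intro ls' q p hn hp
    match ls', hn with
    | [], _ =>
      have hqp : ((q, none) : (syncT T).Q) = (p, none) := by
        exact path_nil_inv hp
      obtain rfl : q = p := congrArg Prod.fst hqp
      exact ⟨[], Transducer.Path.nil _, by simp [evensL, oddsL], by simp [evensL, oddsL],
          by simp [evensL, oddsL]⟩
    | [l1], _ =>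
      obtain ⟨qm, ht, hrest⟩ := path_cons_inv hp
      obtain ⟨bb, _, _, _, hph⟩ := ht
      cases hrest with
      | nil => simp_all
    | l1 :: l2 :: rest, hn =>
      obtain ⟨qm, ht1, hrest1⟩ := path_cons_inv hp
      obtain ⟨qma, qmb⟩ := qm
      obtain ⟨bb, h1some, hl12, hq1, hph1⟩ := ht1
      simp only at hq1 hph1
      subst hq1; subst hph1
      obtain ⟨qm2, ht2, hrest2⟩ := path_cons_inv hrest1
      obtain ⟨qm2a, qm2b⟩ := qm2
      obtain ⟨hl21, bb2, hl22, hph2, hcases⟩ := ht2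
      simp only at hph2 hcases
      subst hph2
      obtain ⟨a0, ha0⟩ := Option.isSome_iff_exists.mp h1some
      obtain ⟨ls, hpath, hins, houts, hmatch⟩ :=
        IH rest.length (by simp only [List.length_cons] at hn; omega) rest qm2a p rfl hrest2
      have hout' : outs (l1 :: l2 :: rest) = bb :: bb2 :: outs rest := by
        simp [hl12, hl22]
      have hin' : ins (l1 :: l2 :: rest) = a0 :: bb :: ins rest := by
        simp [ha0, hl21]
      rcases hcases with ⟨hbbn, hbb2n, hqq⟩ | ⟨_, q1, hclos, htr⟩
      · -- pad cell
        refine ⟨ls, by rwa [hqq] at hpath, ?_, ?_, ?_⟩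
        · rw [hout']
          show ins ls = (bb :: evensL (outs rest)).reduceOption
          rw [reduceOption_cons', hbbn, hins]; rfl
        · rw [hout']
          show outs ls = (bb2 :: oddsL (outs rest)).reduceOption
          rw [reduceOption_cons', hbb2n, houts]; rfl
        · rw [hout', hin']
          show bb :: evensL (outs rest) = bb :: oddsL (ins rest)
          rw [hmatch]
      · -- real transition
        obtain ⟨cls, hclp, hclins, hclouts⟩ := hclos
        refine ⟨cls ++ (bb, bb2) :: ls, ?_, ?_, ?_, ?_⟩
        · exact hclp.append (Transducer.Path.cons htr hpath)
        · rw [hout']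
          show _ = (bb :: evensL (outs rest)).reduceOption
          rw [reduceOption_cons', ins_append, hclins, ins_cons, hins]; rfl
        · rw [hout']
          show _ = (bb2 :: oddsL (outs rest)).reduceOption
          rw [reduceOption_cons', outs_append, hclouts, outs_cons, houts]; rfl
        · rw [hout', hin']
          show bb :: evensL (outs rest) = bb :: oddsL (ins rest)
          rw [hmatch]

end Aux5
section Aux6
open List Transducer

variable {Γ : Type} [Fintype Γ] {A : Type}
set_option linter.unusedSectionVars false

lemma evens_odds (l : List Γ) :
    (∀ a, evensL (a :: l) = a :: oddsL l) ∧ (∀ b, oddsL (b :: l) = evensL l) := by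
  induction l with
  | nil => exact ⟨fun a => rfl, fun b => rfl⟩
  | cons c t ih =>
    constructor
    · intro a
      show a :: evensL t = a :: oddsL (c :: t)
      rw [ih.2]
    · intro b
      show c :: oddsL t = evensL (c :: t)
      rw [ih.1]

/-- decoding: the word carried on odd positions -/
def outw (u : List (Option Γ)) : List Γ := (oddsL u).reduceOption

lemma syncT_accepts_fwd (T : Transducer Γ) {ls : List (Option Γ × Option Γ)} {qf : T.Q}
    (hp : T.Path T.init ls qf) (hf : qf ∈ T.final) {d e f : List (Option Γ)}
    (hde : d.length = e.length) (hef : e.length = f.length)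
    (hs : strip (e.zip f) = strip ls) : (syncT T).Accepts (il d e) (il e f) := by
  obtain ⟨ls', q2, hp', hclos, hins, houts⟩ := syncT_fwd T e f d ls T.init qf hde hef hs hp
  exact ⟨(q2, none), ls', hp', ⟨rfl, qf, hclos, hf⟩, hins, houts⟩

lemma syncT_accepts_rev (T : Transducer Γ) {x y : List (Option Γ)}
    (h : (syncT T).Accepts x y) : T.Accepts (outw x) (outw y) := by
  obtain ⟨qe, ls', hp, hfin, hins, houts⟩ := h
  obtain ⟨pe, peb⟩ := qe
  obtain ⟨hb, qf, hclos, hqf⟩ := hfin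
  simp only at hb
  subst hb
  obtain ⟨ls, hpath, hins', houts', hmatch⟩ := syncT_rev T ls'.length ls' T.init pe rfl hp
  obtain ⟨cls, hclp, hclins, hclouts⟩ := hclos
  refine ⟨qf, ls ++ cls, hpath.append hclp, hqf, ?_, ?_⟩
  · rw [ins_append, hclins, List.append_nil, hins', hmatch, hins]; rfl
  · rw [outs_append, hclouts, List.append_nil, houts', houts]; rfl

/-- the synchronous graph -/
def syncG (G : RationalGraph A Γ) : RationalGraph A (Option Γ) :=
  ⟨fun a => syncT (G.trans a)⟩

lemma syncG_synchronous (G : RationalGraph A Γ) : (syncG G).Synchronous :=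
  fun a => syncT_synchronous (G.trans a)

lemma walk_rev (G : RationalGraph A Γ) {x y : List (Option Γ)} {w : List A}
    (h : (syncG G).Walk x w y) : G.Walk (outw x) w (outw y) := by
  induction h with
  | nil u => exact RationalGraph.Walk.nil _
  | cons he _ ih => exact RationalGraph.Walk.cons (syncT_accepts_rev _ he) ih

lemma walk_runs (G : RationalGraph A Γ) {u v : List Γ} {w : List A} (h : G.Walk u w v) :
    ∃ runs, List.Forall₂ (fun (a : A) ls => ∃ qf, (G.trans a).Path (G.trans a).init ls qf ∧
      qf ∈ (G.trans a).final) w runs ∧ Chained runs u v := by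
  induction h with
  | nil u => exact ⟨[], List.Forall₂.nil, rfl⟩
  | @cons x x' y a w' he _ ih =>
    obtain ⟨runs', hF, hch⟩ := ih
    obtain ⟨qf, ls, hp, hf, hins, houts⟩ := he
    exact ⟨ls :: runs', List.Forall₂.cons ⟨qf, hp, hf⟩ hF, hins, houts ▸ hch⟩

lemma walk_build (G : RationalGraph A Γ) :
    ∀ {w : List A} {runs : List (List (Option Γ × Option Γ))},
    List.Forall₂ (fun (a : A) ls => ∃ qf, (G.trans a).Path (G.trans a).init ls qf ∧
      qf ∈ (G.trans a).final) w runs →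
    ∀ (e : List (Option Γ)) (t : List (List (Option Γ))) (d₀ : List (Option Γ)) (N : ℕ) (f : List (Option Γ)),
    (∀ d ∈ e :: t, d.length = N) → d₀.length = N →
    List.Forall₂ (fun p ls => strip (p.1.zip p.2) = strip ls) ((e :: t).zip t) runs →
    (e :: t).getLast? = some f →
    ∃ ufin, (syncG G).Walk (il d₀ e) w ufin ∧ outw ufin = f.reduceOption := by
  intro w runs hF
  induction hF with
  | nil =>
    intro e t d₀ N f hlen hd0 hcons hlast
    cases t with
    | nil =>
      simp only [List.getLast?_singleton, Option.some.injEq] at hlast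
      subst hlast
      refine ⟨il d₀ e, RationalGraph.Walk.nil _, ?_⟩
      rw [outw, oddsL_il d₀ e (by rw [hd0, hlen e (by simp)])]
    | cons e2 t' => simp [List.zip_cons_cons] at hcons
  | @cons a ls w' runs' hacc _ ih =>
    intro e t d₀ N f hlen hd0 hcons hlast
    cases t with
    | nil => simp at hcons
    | cons e2 t' =>
      rw [List.zip_cons_cons] at hcons
      cases hcons with
      | cons hstrip hcons' =>
        obtain ⟨qf, hp, hfin⟩ := hacc
        have he : e.length = N := hlen e (by simp)
        have he2 : e2.length = N := hlen e2 (by simp)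
        have hedge : (syncG G).Edge (il d₀ e) a (il e e2) :=
          syncT_accepts_fwd _ hp hfin (by rw [hd0, he]) (by rw [he, he2]) hstrip
        obtain ⟨ufin, hwalk, hout⟩ := ih e2 t' e N f
          (fun d hd => hlen d (by simp [List.mem_cons.mp hd])) he hcons'
          (by rwa [List.getLast?_cons_cons] at hlast)
        exact ⟨ufin, RationalGraph.Walk.cons hedge hwalk, hout⟩

/-- DFA reading the letters at odd positions -/
def oddDFA {Q : Type} (M : DFA Γ Q) : DFA (Option Γ) (Bool × Q) where
  step := fun p c => (!p.1, if p.1 then (match c with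
      | some γ => M.step p.2 γ
      | none => p.2) else p.2)
  start := (false, M.start)
  accept := {p | p.2 ∈ M.accept}

lemma oddDFA_eval {Q : Type} (M : DFA Γ Q) :
    ∀ (u : List (Option Γ)) (b : Bool) (q : Q),
    ((oddDFA M).evalFrom (b, q) u).2
      = M.evalFrom q ((if b then evensL u else oddsL u)).reduceOption := by
  intro u
  induction u with
  | nil => intro b q; cases b <;> simp [DFA.evalFrom, evensL, oddsL]
  | cons c u ih =>
    intro b q
    rw [show (oddDFA M).evalFrom (b, q) (c :: u) = (oddDFA M).evalFrom
      ((!b), if b then (match c with | some γ => M.step q γ | none => q) else q) u from rfl]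
    rw [ih]
    cases b with
    | false =>
      simp only [Bool.not_false, if_false]
      rw [(evens_odds u).2 c]
      simp
    | true =>
      simp only [Bool.not_true, if_true]
      rw [(evens_odds u).1 c]
      cases c with
      | none =>
        simp [List.reduceOption_cons_of_none]
      | some γ =>
        rw [List.reduceOption_cons_of_some]
        simp [DFA.evalFrom]

lemma regular_outw_pre {L : Set (List Γ)} (hL : Regular L) :
    Regular {u : List (Option Γ) | outw u ∈ L} := by
  obtain ⟨Q, hQ, M, hM⟩ := hL
  refine ⟨Bool × Q, by infer_instance, oddDFA M, ?_⟩
  ext u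
  rw [DFA.mem_accepts]
  show (oddDFA M).evalFrom ((false : Bool), M.start) u ∈ {p : Bool × Q | p.2 ∈ M.accept}
    ↔ outw u ∈ L
  have := oddDFA_eval M u false M.start
  rw [if_neg (by simp)] at this
  constructor
  · intro h
    have hmem : M.evalFrom M.start (oddsL u).reduceOption ∈ M.accept := by
      rw [← this]; exact h
    have h2 : outw u ∈ M.accepts := (DFA.mem_accepts _).mpr hmem
    rwa [hM] at h2
  · intro h
    rw [← hM] at h
    have hmem := (DFA.mem_accepts _).mp h
    show _ ∈ M.accept
    rw [this]
    exact hmem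

end Aux6
/-- For every rational graph `G` with vertices in `Γ*` and all rational
sets `I`, `F` of initial and final vertices, there exist a synchronous rational graph
`G'` (with vertices over `Γ` extended by a fresh symbol `#`, encoded by `none`) and
rational sets `I'`, `F'` such that `L(G,I,F) = L(G',I',F')`. -/
theorem rational_to_synchronous {A Γ : Type} [Fintype A] [Fintype Γ]
    (G : RationalGraph A Γ) (I F : Set (List Γ)) (hI : Regular I) (hF : Regular F) :
    ∃ (G' : RationalGraph A (Option Γ)) (I' F' : Set (List (Option Γ))),
      G'.Synchronous ∧ Regular I' ∧ Regular F' ∧ G.Lang I F = G'.Lang I' F' := by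
  refine ⟨syncG G, {u | outw u ∈ I}, {u | outw u ∈ F}, syncG_synchronous G,
    regular_outw_pre hI, regular_outw_pre hF, ?_⟩
  ext w
  rw [show (w ∈ G.Lang I F) ↔ _ from G.lang_iff_walk I F w,
      show (w ∈ (syncG G).Lang _ _) ↔ _ from (syncG G).lang_iff_walk _ _ w]
  constructor
  · rintro ⟨u, v, hu, hv, hw⟩
    obtain ⟨runs, hF2, hch⟩ := walk_runs G hw
    obtain ⟨N, ds, hlen, hall, ⟨e, t, rfl, he⟩, ⟨f, hf, hfv⟩, hcons⟩ := thread runs u v hch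
    have htail : (e :: t).tail = t := rfl
    rw [htail] at hcons
    obtain ⟨ufin, hwalk, hout⟩ :=
      walk_build G hF2 e t (List.replicate N none) N f hall (by simp) hcons hf
    refine ⟨il (List.replicate N none) e, ufin, ?_, ?_, hwalk⟩
    · show outw _ ∈ I
      rw [outw, oddsL_il _ _ (by simp [hall e (by simp)]), he]
      exact hu
    · show outw ufin ∈ F
      rw [hout, hfv]
      exact hv
  · rintro ⟨x, y, hx, hy, hw⟩
    exact ⟨outw x, outw y, hx, hy, walk_rev G hw⟩
end

section
/- Given a tiling system S = (Γ, Σ, #, Δ), there exist a synchronous rational graph G and two rational sets I and F of vertices such that L(G,I,F) = L(S). -/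
lemma CM.chain'_iff_getElem? {α : Type*} {R : α → α → Prop} : ∀ (l : List α),
    l.IsChain R ↔ ∀ (i : ℕ) (a b : α), l[i]? = some a → l[i+1]? = some b → R a b := by
  intro l
  induction l with
  | nil => simp
  | cons x l ih =>
    cases l with
    | nil =>
      simp only [List.isChain_singleton, true_iff]
      intro i a b ha hb
      rcases i with _ | i <;> simp at hb
    | cons y l' =>
      rw [List.isChain_cons_cons, ih]
      constructor
      · rintro ⟨hxy, h⟩ i a b ha hb
        rcases i with _ | i
        · simp only [List.getElem?_cons_zero, Option.some_inj] at ha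
          simp only [List.getElem?_cons_succ, List.getElem?_cons_zero, Option.some_inj] at hb
          subst ha; subst hb; exact hxy
        · exact h i a b (by simpa using ha) (by simpa using hb)
      · intro h
        refine ⟨h 0 x y (by simp) (by simp), fun i a b ha hb => h (i+1) a b ?_ ?_⟩
        · simpa using ha
        · simpa using hb

lemma CM.zip_getLast? {α β : Type*} {u : List α} {v : List β} (h : u.length = v.length)
    {x : α} {y : β} (hx : u.getLast? = some x) (hy : v.getLast? = some y) :
    (u.zip v).getLast? = some (x, y) := by
  rw [List.getLast?_eq_getElem?] at hx hy ⊢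
  rw [List.length_zip, ← h, min_self]
  rw [List.getElem?_zip_eq_some]
  rw [← h] at hy
  exact ⟨hx, hy⟩

lemma CM.map_range_getD {α : Type*} {c : List α} {n : ℕ} (h : c.length = n) (d : α) :
    (List.range n).map (fun i => c.getD i d) = c := by
  subst h
  refine List.ext_getElem? (fun i => ?_)
  rcases lt_or_ge i c.length with h | h
  · rw [List.getElem?_map, List.getElem?_range h, List.getElem?_eq_getElem h]
    simp [List.getD_eq_getElem c d h, List.getElem?_eq_getElem h]
  · rw [List.getElem?_map, List.getElem?_eq_none (by simpa using h),
      List.getElem?_eq_none (by simpa using h)]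
    rfl

namespace CM
open Transducer

variable {A Λ : Type}

inductive QT (Λ : Type) where
  | st0 | stE | stA (x : Option Λ) | stM (x : Option Λ) (μ : Λ)
  deriving DecidableEq, Fintype

def RtS (S : TilingSystem A Λ) : (Option Λ × Option Λ) → (Option Λ × Option Λ) → Prop :=
  fun p q => Tile.mk p.1 p.2 q.1 q.2 ∈ S.tiles

def EdgeSpec (S : TilingSystem A Λ) (a : A) (u v : List (Option Λ)) : Prop :=
  u.length = v.length ∧
  (∃ col : List Λ, col.head? = some (S.emb a) ∧ v = none :: (col.map some ++ [none])) ∧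
  (u.zip v).IsChain (RtS S)

def Ttrans (S : TilingSystem A Λ) (a : A) :
    QT Λ → Option (Option Λ) × Option (Option Λ) → QT Λ → Prop :=
  fun q l q' =>
    (∃ x, q = .st0 ∧ l = (some x, some none) ∧ q' = .stA x) ∨
    (∃ x x₁, q = .stA x ∧ l = (some x₁, some (some (S.emb a))) ∧
        Tile.mk x none x₁ (some (S.emb a)) ∈ S.tiles ∧ q' = .stM x₁ (S.emb a)) ∨
    (∃ x μ x' μ', q = .stM x μ ∧ l = (some x', some (some μ')) ∧
        Tile.mk x (some μ) x' (some μ') ∈ S.tiles ∧ q' = .stM x' μ') ∨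
    (∃ x μ x', q = .stM x μ ∧ l = (some x', some none) ∧
        Tile.mk x (some μ) x' none ∈ S.tiles ∧ q' = .stE)

def Tdef (S : TilingSystem A Λ) [Fintype Λ] (a : A) : Transducer (Option Λ) where
  Q := QT Λ
  fintypeQ := inferInstance
  init := .st0
  final := {.stE}
  trans := Ttrans S a

def Inv (S : TilingSystem A Λ) (a : A) : QT Λ → List (Option Λ) → List (Option Λ) → Prop
  | .st0, u, v => u = [] ∧ v = []
  | .stA x, u, v => u = [x] ∧ v = [none]
  | .stM x μ, u, v =>
      u.getLast? = some x ∧ u.length = v.length ∧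
      (∃ col : List Λ, col.head? = some (S.emb a) ∧ col.getLast? = some μ ∧
        v = none :: col.map some) ∧
      (u.zip v).IsChain (RtS S)
  | .stE, u, v => EdgeSpec S a u v

lemma inv_step (S : TilingSystem A Λ) (a : A) {q q' : QT Λ}
    {l : Option (Option Λ) × Option (Option Λ)} (h : Ttrans S a q l q')
    {u v : List (Option Λ)} (hI : Inv S a q u v) :
    Inv S a q' (u ++ l.1.toList) (v ++ l.2.toList) := by
  rcases h with ⟨x, rfl, rfl, rfl⟩ | ⟨x, x₁, hq, rfl, ht, rfl⟩ |
      ⟨x, μ, x', μ', hq, rfl, ht, rfl⟩ | ⟨x, μ, x', hq, rfl, ht, rfl⟩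
  · obtain ⟨rfl, rfl⟩ := hI
    simp [Inv]
  · subst hq
    obtain ⟨rfl, rfl⟩ := hI
    refine ⟨by simp, by simp, ⟨[S.emb a], by simp, by simp, by simp⟩, ?_⟩
    simpa [RtS] using ht
  · subst hq
    obtain ⟨hlast, hlen, ⟨col, hhd, hlst, rfl⟩, hch⟩ := hI
    obtain ⟨c0, ctl, rfl⟩ : ∃ c0 ctl, col = c0 :: ctl := by
      cases col with
      | nil => simp at hhd
      | cons c0 ctl => exact ⟨c0, ctl, rfl⟩
    refine ⟨by simp, by simp [hlen], ⟨(c0 :: ctl) ++ [μ'], by simpa using hhd,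
      by rw [List.getLast?_concat], by simp⟩, ?_⟩
    simp only [List.cons_append, List.map_append, Option.toList_some]
    rw [← List.cons_append,
      List.zip_append (show u.length = ((none : Option Λ) :: List.map some (c0 :: ctl)).length
        from by simpa using hlen),
      List.zip_cons_cons, List.zip_nil_right, List.isChain_append]
    refine ⟨hch, by simp, ?_⟩
    intro p hp q hq'
    have hvl : ((none : Option Λ) :: List.map some (c0 :: ctl)).getLast? = some (some μ) := by
      rw [List.map_cons, List.getLast?_cons_cons, ← List.map_cons, List.getLast?_map, hlst]
      rfl
    rw [CM.zip_getLast? (by simpa using hlen) hlast hvl] at hp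
    simp only [List.head?_cons, Option.mem_def, Option.some_inj] at hp hq'
    subst hp; subst hq'
    exact ht
  · subst hq
    obtain ⟨hlast, hlen, ⟨col, hhd, hlst, rfl⟩, hch⟩ := hI
    obtain ⟨c0, ctl, rfl⟩ : ∃ c0 ctl, col = c0 :: ctl := by
      cases col with
      | nil => simp at hhd
      | cons c0 ctl => exact ⟨c0, ctl, rfl⟩
    simp only [Option.toList_some]
    refine ⟨by simp [hlen], ⟨c0 :: ctl, hhd, by simp⟩, ?_⟩
    rw [List.zip_append (show u.length = ((none : Option Λ) :: List.map some (c0 :: ctl)).length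
        from by simpa using hlen),
      List.zip_cons_cons, List.zip_nil_right, List.isChain_append]
    refine ⟨hch, by simp, ?_⟩
    intro p hp q hq'
    have hvl : ((none : Option Λ) :: List.map some (c0 :: ctl)).getLast? = some (some μ) := by
      rw [List.map_cons, List.getLast?_cons_cons, ← List.map_cons, List.getLast?_map, hlst]
      rfl
    rw [CM.zip_getLast? (by simpa using hlen) hlast hvl] at hp
    simp only [List.head?_cons, Option.mem_def, Option.some_inj] at hp hq'
    subst hp; subst hq'
    exact ht

lemma ins_cons (l : Option (Option Λ) × Option (Option Λ))
    (ls : List (Option (Option Λ) × Option (Option Λ))) :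
    Transducer.ins (l :: ls) = l.1.toList ++ Transducer.ins ls := by
  simp [Transducer.ins]

lemma outs_cons (l : Option (Option Λ) × Option (Option Λ))
    (ls : List (Option (Option Λ) × Option (Option Λ))) :
    Transducer.outs (l :: ls) = l.2.toList ++ Transducer.outs ls := by
  simp [Transducer.outs]

lemma inv_path (S : TilingSystem A Λ) [Fintype Λ] (a : A) {q q' : (Tdef S a).Q}
    {ls : List (Option (Option Λ) × Option (Option Λ))}
    (h : Transducer.Path (Tdef S a) q ls q') :
    ∀ u v, Inv S a q u v → Inv S a q' (u ++ Transducer.ins ls) (v ++ Transducer.outs ls) := by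
  induction h with
  | nil q => intro u v hI; simpa [Transducer.ins, Transducer.outs] using hI
  | @cons q1 q2 q3 l ls ht hp ih =>
    intro u v hI
    have h2 := ih (u ++ l.1.toList) (v ++ l.2.toList) (inv_step S a ht hI)
    simpa [Transducer.ins, Transducer.outs, List.append_assoc] using h2

lemma accepts_to_spec (S : TilingSystem A Λ) [Fintype Λ] (a : A) {u v : List (Option Λ)}
    (h : (Tdef S a).Accepts u v) : EdgeSpec S a u v := by
  obtain ⟨q, ls, hp, hf, hi, ho⟩ := h
  have hq : q = QT.stE := hf
  subst hq
  have := inv_path S a hp [] [] (by exact ⟨rfl, rfl⟩)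
  rw [hi, ho] at this
  simpa [Inv] using this

lemma mid_path (S : TilingSystem A Λ) [Fintype Λ] (a : A) :
    ∀ (cs : List Λ) (ur : List (Option Λ)) (x : Option Λ) (μ : Λ),
    ur.length = cs.length + 1 →
    (((x, some μ) : Option Λ × Option Λ) :: ur.zip (cs.map some ++ [none])).IsChain (RtS S) →
    ∃ ls, Transducer.Path (Tdef S a) (.stM x μ) ls .stE ∧
      Transducer.ins ls = ur ∧ Transducer.outs ls = cs.map some ++ [(none : Option Λ)] := by
  intro cs
  induction cs with
  | nil =>
    intro ur x μ hlen hch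
    obtain ⟨x', rfl⟩ : ∃ x', ur = [x'] := by
      cases ur with
      | nil => simp at hlen
      | cons a t => cases t with
        | nil => exact ⟨a, rfl⟩
        | cons b t' => simp at hlen
    simp only [List.map_nil, List.nil_append, List.zip_cons_cons, List.zip_nil_right,
      List.isChain_cons_cons, List.isChain_singleton, and_true] at hch
    refine ⟨[(some x', some none)], ?_, by simp [Transducer.ins], by simp [Transducer.outs]⟩
    exact Transducer.Path.cons
      (Or.inr (Or.inr (Or.inr ⟨x, μ, x', rfl, rfl, hch, rfl⟩)))
      (Transducer.Path.nil _)
  | cons μ' cs' ih =>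
    intro ur x μ hlen hch
    obtain ⟨x', ur', rfl⟩ : ∃ x' ur', ur = x' :: ur' := by
      cases ur with
      | nil => simp at hlen
      | cons a t => exact ⟨a, t, rfl⟩
    simp only [List.map_cons, List.cons_append, List.zip_cons_cons, List.isChain_cons_cons] at hch
    obtain ⟨ht, hch'⟩ := hch
    obtain ⟨ls, hp, hi, ho⟩ := ih ur' x' μ' (by simpa using hlen) hch'
    refine ⟨(some x', some (some μ')) :: ls, ?_, by simp [ins_cons, hi],
      by simp [outs_cons, ho]⟩
    exact Transducer.Path.cons
      (Or.inr (Or.inr (Or.inl ⟨x, μ, x', μ', rfl, rfl, ht, rfl⟩))) hp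

lemma spec_to_accepts (S : TilingSystem A Λ) [Fintype Λ] (a : A) {u v : List (Option Λ)}
    (h : EdgeSpec S a u v) : (Tdef S a).Accepts u v := by
  obtain ⟨hlen, ⟨col, hhd, rfl⟩, hch⟩ := h
  obtain ⟨c0, ctl, rfl⟩ : ∃ c0 ctl, col = c0 :: ctl := by
    cases col with
    | nil => simp at hhd
    | cons c0 ctl => exact ⟨c0, ctl, rfl⟩
  have hc0 : c0 = S.emb a := by simpa using hhd
  subst hc0
  obtain ⟨x0, x1, ur, rfl⟩ : ∃ x0 x1 ur, u = x0 :: x1 :: ur := by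
    cases u with
    | nil => simp at hlen
    | cons a t => cases t with
      | nil => simp at hlen
      | cons b t' => exact ⟨a, b, t', rfl⟩
  simp only [List.map_cons, List.cons_append, List.zip_cons_cons, List.isChain_cons_cons] at hch
  obtain ⟨ht1, ht2⟩ := hch
  obtain ⟨ls, hp, hi, ho⟩ := mid_path S a ctl ur x1 (S.emb a) (by simpa using hlen) ht2
  refine ⟨.stE, (some x0, some none) :: (some x1, some (some (S.emb a))) :: ls,
    ?_, rfl, ?_, ?_⟩
  · refine Transducer.Path.cons (Or.inl ⟨x0, rfl, rfl, rfl⟩) ?_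
    refine Transducer.Path.cons (Or.inr (Or.inl ⟨x0, x1, rfl, rfl, ht1, rfl⟩)) hp
  · simp [ins_cons, hi]
  · simp [outs_cons, ho]

lemma edge_iff (S : TilingSystem A Λ) [Fintype Λ] (a : A) (u v : List (Option Λ)) :
    (Tdef S a).Accepts u v ↔ EdgeSpec S a u v :=
  ⟨accepts_to_spec S a, spec_to_accepts S a⟩

lemma tdef_synchronous (S : TilingSystem A Λ) [Fintype Λ] (a : A) :
    (Tdef S a).Synchronous := by
  rintro q q' l (⟨x, rfl, rfl, rfl⟩ | ⟨x, x₁, hq, rfl, ht, rfl⟩ |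
      ⟨x, μ, x', μ', hq, rfl, ht, rfl⟩ | ⟨x, μ, x', hq, rfl, ht, rfl⟩) <;> simp

/-! DFAs for the initial and final vertex sets. -/

def Idfa (Λ : Type) : DFA (Option Λ) Bool where
  step := fun q x => q && x.isNone
  start := true
  accept := {true}

lemma Idfa_evalFrom (Λ : Type) : ∀ (l : List (Option Λ)) (b : Bool),
    (Idfa Λ).evalFrom b l = (b && l.all Option.isNone) := by
  intro l
  induction l with
  | nil => intro b; simp [DFA.evalFrom, Idfa]
  | cons x t ih =>
    intro b
    have : (Idfa Λ).evalFrom b (x :: t) = (Idfa Λ).evalFrom (b && x.isNone) t := rfl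
    rw [this, ih]
    simp [Bool.and_assoc]

lemma Idfa_accepts (Λ : Type) :
    (Idfa Λ).accepts = {l : List (Option Λ) | ∀ x ∈ l, x = none} := by
  ext l
  rw [DFA.mem_accepts]
  show (Idfa Λ).evalFrom true l ∈ _ ↔ _
  rw [Idfa_evalFrom]
  simp only [Idfa, Bool.true_and, List.all_eq_true, Option.isNone_iff_eq_none,
    Set.mem_setOf_eq, Set.mem_singleton_iff]
  exact Iff.rfl

inductive QF (Λ : Type) where
  | start | border | fin | dead | col (μ : Λ)
  deriving DecidableEq, Fintype

def Rb (S : TilingSystem A Λ) : Option Λ → Option Λ → Prop :=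
  fun x0 x1 => Tile.mk x0 none x1 none ∈ S.tiles

def Fset (S : TilingSystem A Λ) : Set (List (Option Λ)) :=
  {u | ∃ (μ : Λ) (cs : List Λ),
    u = none :: ((μ :: cs).map some ++ [none]) ∧ u.IsChain (Rb S)}

open Classical in
noncomputable def Fdfa (S : TilingSystem A Λ) : DFA (Option Λ) (QF Λ) where
  step := fun q x =>
    match q, x with
    | .start, none => .border
    | .start, some _ => .dead
    | .border, some μ => if Tile.mk none none (some μ) none ∈ S.tiles then .col μ else .dead
    | .border, none => .dead
    | .col μ, some μ' =>
        if Tile.mk (some μ) none (some μ') none ∈ S.tiles then .col μ' else .dead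
    | .col μ, none => if Tile.mk (some μ) none none none ∈ S.tiles then .fin else .dead
    | .fin, _ => .dead
    | .dead, _ => .dead
  start := .start
  accept := {.fin}

lemma Fdfa_dead (S : TilingSystem A Λ) : ∀ l : List (Option Λ),
    (Fdfa S).evalFrom .dead l = .dead := by
  intro l
  induction l with
  | nil => rfl
  | cons x t ih =>
    have : (Fdfa S).evalFrom QF.dead (x :: t) = (Fdfa S).evalFrom ((Fdfa S).step .dead x) t := rfl
    rw [this]
    have hs : (Fdfa S).step QF.dead x = QF.dead := by cases x <;> simp [Fdfa]
    rw [hs, ih]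

lemma Fdfa_fin (S : TilingSystem A Λ) : ∀ l : List (Option Λ),
    (Fdfa S).evalFrom QF.fin l ∈ (Fdfa S).accept ↔ l = [] := by
  intro l
  cases l with
  | nil => simp [DFA.evalFrom, Fdfa]
  | cons x t =>
    have : (Fdfa S).evalFrom QF.fin (x :: t) = (Fdfa S).evalFrom ((Fdfa S).step .fin x) t := rfl
    rw [this]
    have hs : (Fdfa S).step QF.fin x = QF.dead := by cases x <;> simp [Fdfa]
    rw [hs, Fdfa_dead]
    simp [Fdfa]

lemma Fdfa_col (S : TilingSystem A Λ) : ∀ (l : List (Option Λ)) (μ : Λ),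
    ((Fdfa S).evalFrom (QF.col μ) l ∈ (Fdfa S).accept ↔
      ∃ cs : List Λ, l = cs.map some ++ [none] ∧
        ((some μ : Option Λ) :: l).IsChain (Rb S)) := by
  intro l
  induction l with
  | nil =>
    intro μ
    constructor
    · intro h; simp [DFA.evalFrom, Fdfa] at h
    · rintro ⟨cs, hcs, -⟩; simp at hcs
  | cons x t ih =>
    intro μ
    have hstep : (Fdfa S).evalFrom (QF.col μ) (x :: t) =
        (Fdfa S).evalFrom ((Fdfa S).step (.col μ) x) t := rfl
    rw [hstep]
    cases x with
    | none =>
      by_cases htl : Tile.mk (some μ) none none none ∈ S.tiles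
      · have hs : (Fdfa S).step (QF.col μ) none = QF.fin := by simp [Fdfa, htl]
        rw [hs, Fdfa_fin]
        constructor
        · rintro rfl
          exact ⟨[], by simp, by simp [Rb, htl]⟩
        · rintro ⟨cs, hcs, -⟩
          cases cs with
          | nil => simpa using hcs
          | cons c cs' => simp at hcs
      · have hs : (Fdfa S).step (QF.col μ) none = QF.dead := by simp [Fdfa, htl]
        rw [hs, Fdfa_dead]
        constructor
        · intro h; simp [Fdfa] at h
        · rintro ⟨cs, hcs, hch⟩
          cases cs with
          | nil =>
            simp only [List.map_nil, List.nil_append, List.cons.injEq] at hcs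
            rw [List.isChain_cons_cons] at hch
            exact absurd hch.1 htl
          | cons c cs' => simp at hcs
    | some μ' =>
      by_cases htl : Tile.mk (some μ) none (some μ') none ∈ S.tiles
      · have hs : (Fdfa S).step (QF.col μ) (some μ') = QF.col μ' := by simp [Fdfa, htl]
        rw [hs, ih]
        constructor
        · rintro ⟨cs, rfl, hch⟩
          exact ⟨μ' :: cs, by simp, by
            rw [List.isChain_cons_cons]
            exact ⟨htl, hch⟩⟩
        · rintro ⟨cs, hcs, hch⟩
          cases cs with
          | nil => simp at hcs
          | cons c cs' =>
            simp only [List.map_cons, List.cons_append, List.cons.injEq,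
              Option.some_inj] at hcs
            obtain ⟨rfl, rfl⟩ := hcs
            rw [List.isChain_cons_cons] at hch
            exact ⟨cs', rfl, hch.2⟩
      · have hs : (Fdfa S).step (QF.col μ) (some μ') = QF.dead := by simp [Fdfa, htl]
        rw [hs, Fdfa_dead]
        constructor
        · intro h; simp [Fdfa] at h
        · rintro ⟨cs, hcs, hch⟩
          cases cs with
          | nil => simp at hcs
          | cons c cs' =>
            simp only [List.map_cons, List.cons_append, List.cons.injEq,
              Option.some_inj] at hcs
            obtain ⟨rfl, -⟩ := hcs
            rw [List.isChain_cons_cons] at hch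
            exact absurd hch.1 htl

lemma Fdfa_accepts (S : TilingSystem A Λ) : (Fdfa S).accepts = Fset S := by
  ext u
  rw [DFA.mem_accepts]
  show (Fdfa S).evalFrom QF.start u ∈ _ ↔ _
  cases u with
  | nil =>
    simp only [DFA.evalFrom, List.foldl_nil]
    constructor
    · intro h; simp [Fdfa] at h
    · rintro ⟨μ, cs, hcs, -⟩; simp at hcs
  | cons x u' =>
    have hstep : (Fdfa S).evalFrom QF.start (x :: u') =
        (Fdfa S).evalFrom ((Fdfa S).step .start x) u' := rfl
    rw [hstep]
    cases x with
    | some μ =>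
      have hs : (Fdfa S).step QF.start (some μ) = QF.dead := by simp [Fdfa]
      rw [hs, Fdfa_dead]
      constructor
      · intro h; simp [Fdfa] at h
      · rintro ⟨μ', cs, hcs, -⟩; simp at hcs
    | none =>
      have hs : (Fdfa S).step QF.start none = QF.border := by simp [Fdfa]
      rw [hs]
      cases u' with
      | nil =>
        simp only [DFA.evalFrom, List.foldl_nil]
        constructor
        · intro h; simp [Fdfa] at h
        · rintro ⟨μ, cs, hcs, -⟩; simp at hcs
      | cons y t =>
        have hstep2 : (Fdfa S).evalFrom QF.border (y :: t) =
            (Fdfa S).evalFrom ((Fdfa S).step .border y) t := rfl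
        rw [hstep2]
        cases y with
        | none =>
          have hs2 : (Fdfa S).step QF.border none = QF.dead := by simp [Fdfa]
          rw [hs2, Fdfa_dead]
          constructor
          · intro h; simp [Fdfa] at h
          · rintro ⟨μ, cs, hcs, -⟩; simp at hcs
        | some μ =>
          by_cases htl : Tile.mk none none (some μ) none ∈ S.tiles
          · have hs2 : (Fdfa S).step QF.border (some μ) = QF.col μ := by simp [Fdfa, htl]
            rw [hs2, Fdfa_col]
            constructor
            · rintro ⟨cs, rfl, hch⟩
              refine ⟨μ, cs, by simp, ?_⟩
              rw [List.isChain_cons_cons]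
              exact ⟨htl, hch⟩
            · rintro ⟨μ', cs, hcs, hch⟩
              simp only [List.map_cons, List.cons_append, List.cons.injEq,
                Option.some_inj] at hcs
              obtain ⟨-, rfl, rfl⟩ := hcs
              rw [List.isChain_cons_cons] at hch
              exact ⟨cs, rfl, hch.2⟩
          · have hs2 : (Fdfa S).step QF.border (some μ) = QF.dead := by simp [Fdfa, htl]
            rw [hs2, Fdfa_dead]
            constructor
            · intro h; simp [Fdfa] at h
            · rintro ⟨μ', cs, hcs, hch⟩
              simp only [List.map_cons, List.cons_append, List.cons.injEq,
                Option.some_inj] at hcs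
              obtain ⟨-, rfl, rfl⟩ := hcs
              rw [List.isChain_cons_cons] at hch
              exact absurd hch.1 htl

/-! Columns of framed pictures. -/

def ecol (rows : List (List Λ)) (j : ℕ) : List (Option Λ) :=
  none :: (rows.map (fun r => match j with | 0 => none | Nat.succ k => r[k]?) ++ [(none : Option Λ)])

lemma ecol_length (rows : List (List Λ)) (j : ℕ) :
    (ecol rows j).length = rows.length + 2 := by
  simp [ecol]

lemma ecol_zero (rows : List (List Λ)) :
    ecol rows 0 = List.replicate (rows.length + 2) none := by
  have h1 : rows.map (fun r => (match 0 with | 0 => none | Nat.succ k => r[k]?: Option Λ)) =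
      List.replicate rows.length none := by
    rw [List.eq_replicate_iff]
    refine ⟨by simp, ?_⟩
    intro b hb
    obtain ⟨r, -, rfl⟩ := List.mem_map.mp hb
    rfl
  rw [ecol, h1, ← List.replicate_succ', ← List.replicate_succ]

lemma ecol_of_ge (rows : List (List Λ)) {m j : ℕ} (hrows : ∀ r ∈ rows, r.length = m)
    (hj : m ≤ j) :
    ecol rows (j + 1) = List.replicate (rows.length + 2) none := by
  have h1 : rows.map (fun r => (match j + 1 with | 0 => none | Nat.succ k => r[k]?: Option Λ)) =
      List.replicate rows.length none := by
    rw [List.eq_replicate_iff]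
    refine ⟨by simp, ?_⟩
    intro b hb
    obtain ⟨r, hr, rfl⟩ := List.mem_map.mp hb
    exact List.getElem?_eq_none (by rw [hrows r hr]; exact hj)
  rw [ecol, h1, ← List.replicate_succ', ← List.replicate_succ]

lemma framed_length (rows : List (List Λ)) (m : ℕ) :
    (framed rows m).length = rows.length + 2 := by
  simp [framed]

lemma framed_row_length (rows : List (List Λ)) {m : ℕ} (hrows : ∀ r ∈ rows, r.length = m) :
    ∀ r ∈ framed rows m, r.length = m + 2 := by
  intro r hr
  rw [framed] at hr
  rcases List.mem_cons.mp hr with rfl | hr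
  · simp
  rcases List.mem_append.mp hr with hr | hr
  · obtain ⟨r', hr', rfl⟩ := List.mem_map.mp hr
    simp [hrows r' hr']
  · simp only [List.mem_singleton] at hr
    subst hr
    simp

lemma frame_entry (rows : List (List Λ)) (m : ℕ) (hrows : ∀ r ∈ rows, r.length = m)
    {i j : ℕ} (hi : i < rows.length + 2) (hj : j < m + 2) :
    ((framed rows m)[i]?.bind fun r => r[j]?) = (ecol rows j)[i]? := by
  rcases i with _ | k
  · have h0 : (framed rows m)[0]? = some (List.replicate (m+2) (none : Option Λ)) := by
      rw [framed]; exact List.getElem?_cons_zero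
    rw [h0, Option.bind_some, List.getElem?_replicate, if_pos hj, ecol,
      List.getElem?_cons_zero]
  · rcases lt_or_ge k rows.length with hk | hk
    · have hf : (framed rows m)[k+1]? =
          some (none :: (List.map some rows[k] ++ [none])) := by
        rw [framed, List.getElem?_append, if_pos (by simp; omega), List.getElem?_cons_succ,
          List.getElem?_map, List.getElem?_eq_getElem hk]
        rfl
      have hr : (rows[k]).length = m := hrows _ (List.getElem_mem hk)
      rcases j with _ | t
      · have he : (ecol rows 0)[k+1]? = some (none : Option Λ) := by
          rw [ecol, List.getElem?_cons_succ, List.getElem?_append, if_pos (by simpa using hk),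
            List.getElem?_map, List.getElem?_eq_getElem hk]
          rfl
        rw [hf, he, Option.bind_some]
        exact List.getElem?_cons_zero
      · have he : (ecol rows (t+1))[k+1]? = some (rows[k][t]?) := by
          rw [ecol, List.getElem?_cons_succ, List.getElem?_append, if_pos (by simpa using hk),
            List.getElem?_map, List.getElem?_eq_getElem hk]
          rfl
        rw [hf, he, Option.bind_some]
        rw [List.getElem?_cons_succ]
        rcases lt_or_ge t m with ht | ht
        · rw [List.getElem?_append, if_pos (by simp [hr, ht]), List.getElem?_map,
            List.getElem?_eq_getElem (show t < (rows[k]).length by rw [hr]; exact ht)]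
          rfl
        · have htm : t = m := by omega
          subst htm
          rw [List.getElem?_append, if_neg (by simp [hr]),
            List.getElem?_eq_none (le_of_eq hr)]
          simp [hr]
    · have hk' : k = rows.length := by omega
      subst hk'
      have hf : (framed rows m)[rows.length+1]? =
          some (List.replicate (m+2) (none : Option Λ)) := by
        rw [framed, List.getElem?_append, if_neg (by simp)]
        simp
      have he : (ecol rows j)[rows.length+1]? = some (none : Option Λ) := by
        rw [ecol, List.getElem?_cons_succ, List.getElem?_append, if_neg (by simp)]
        simp
      rw [hf, he, Option.bind_some, List.getElem?_replicate, if_pos hj]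
lemma tiles_to_chain (S : TilingSystem A Λ) (rows : List (List Λ)) {m : ℕ}
    (hrows : ∀ r ∈ rows, r.length = m)
    (htiles : tilesOf (framed rows m) ⊆ S.tiles) {j : ℕ} (hj : j ≤ m) :
    ((ecol rows j).zip (ecol rows (j+1))).IsChain (RtS S) := by
  rw [CM.chain'_iff_getElem?]
  intro i p q hp hq
  rw [List.getElem?_zip_eq_some] at hp hq
  obtain ⟨hp1, hp2⟩ := hp
  obtain ⟨hq1, hq2⟩ := hq
  have hi : i < rows.length + 2 := by
    obtain ⟨h, -⟩ := List.getElem?_eq_some_iff.mp hp1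
    simpa [ecol_length] using h
  have hi1 : i + 1 < rows.length + 2 := by
    obtain ⟨h, -⟩ := List.getElem?_eq_some_iff.mp hq1
    simpa [ecol_length] using h
  have e1 := frame_entry rows m hrows hi (show j < m + 2 by omega)
  have e2 := frame_entry rows m hrows hi (show j + 1 < m + 2 by omega)
  have e3 := frame_entry rows m hrows hi1 (show j < m + 2 by omega)
  have e4 := frame_entry rows m hrows hi1 (show j + 1 < m + 2 by omega)
  rw [hp1] at e1; rw [hp2] at e2; rw [hq1] at e3; rw [hq2] at e4
  obtain ⟨r1, hr1, hr1j⟩ := Option.bind_eq_some_iff.mp e1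
  obtain ⟨r1', hr1', hr1j'⟩ := Option.bind_eq_some_iff.mp e2
  obtain ⟨r2, hr2, hr2j⟩ := Option.bind_eq_some_iff.mp e3
  obtain ⟨r2', hr2', hr2j'⟩ := Option.bind_eq_some_iff.mp e4
  rw [hr1] at hr1'
  rw [hr2] at hr2'
  obtain rfl : r1 = r1' := Option.some_inj.mp hr1'
  obtain rfl : r2 = r2' := Option.some_inj.mp hr2'
  exact htiles ⟨i, j, r1, r2, hr1, hr2, hr1j, hr1j', hr2j, hr2j'⟩

lemma chain_to_tiles (S : TilingSystem A Λ) (rows : List (List Λ)) {m : ℕ}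
    (hrows : ∀ r ∈ rows, r.length = m)
    (h : ∀ j, j ≤ m → ((ecol rows j).zip (ecol rows (j+1))).IsChain (RtS S)) :
    tilesOf (framed rows m) ⊆ S.tiles := by
  rintro ⟨tl, tr, bl, br⟩ ⟨i, j, r1, r2, h1, h2, htl, htr, hbl, hbr⟩
  have hi1 : i + 1 < rows.length + 2 := by
    obtain ⟨hh, -⟩ := List.getElem?_eq_some_iff.mp h2
    simpa [framed_length] using hh
  have hi : i < rows.length + 2 := by omega
  have hr1mem : r1 ∈ framed rows m := by
    obtain ⟨hh, he⟩ := List.getElem?_eq_some_iff.mp h1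
    exact he ▸ List.getElem_mem hh
  have hj1 : j + 1 < m + 2 := by
    obtain ⟨hh, -⟩ := List.getElem?_eq_some_iff.mp htr
    rwa [framed_row_length rows hrows r1 hr1mem] at hh
  have hj : j < m + 2 := by omega
  have e1 := frame_entry rows m hrows hi hj
  have e2 := frame_entry rows m hrows hi hj1
  have e3 := frame_entry rows m hrows hi1 hj
  have e4 := frame_entry rows m hrows hi1 hj1
  rw [h1, Option.bind_some, htl] at e1
  rw [h1, Option.bind_some, htr] at e2
  rw [h2, Option.bind_some, hbl] at e3
  rw [h2, Option.bind_some, hbr] at e4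
  have hc := h j (by omega)
  rw [CM.chain'_iff_getElem?] at hc
  exact hc i (tl, tr) (bl, br) (List.getElem?_zip_eq_some.mpr ⟨e1.symm, e2.symm⟩)
    (List.getElem?_zip_eq_some.mpr ⟨e3.symm, e4.symm⟩)

lemma chain_rb_iff (S : TilingSystem A Λ) (u : List (Option Λ)) {K : ℕ} (hK : u.length = K) :
    u.IsChain (Rb S) ↔ (u.zip (List.replicate K none)).IsChain (RtS S) := by
  rw [CM.chain'_iff_getElem?, CM.chain'_iff_getElem?]
  constructor
  · intro h i p q hp hq
    rw [List.getElem?_zip_eq_some] at hp hq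
    obtain ⟨hp1, hp2⟩ := hp
    obtain ⟨hq1, hq2⟩ := hq
    have hp2' : p.2 = none := by
      rw [List.getElem?_replicate] at hp2
      split at hp2
      · exact (Option.some_inj.mp hp2).symm
      · exact absurd hp2 (by simp)
    have hq2' : q.2 = none := by
      rw [List.getElem?_replicate] at hq2
      split at hq2
      · exact (Option.some_inj.mp hq2).symm
      · exact absurd hq2 (by simp)
    have := h i p.1 q.1 hp1 hq1
    show Tile.mk p.1 p.2 q.1 q.2 ∈ S.tiles
    rw [hp2', hq2']
    exact this
  · intro h i a b ha hb
    have hia : i < K := by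
      obtain ⟨hh, -⟩ := List.getElem?_eq_some_iff.mp ha; omega
    have hib : i + 1 < K := by
      obtain ⟨hh, -⟩ := List.getElem?_eq_some_iff.mp hb; omega
    exact h i (a, none) (b, none)
      (List.getElem?_zip_eq_some.mpr ⟨ha, by rw [List.getElem?_replicate, if_pos hia]⟩)
      (List.getElem?_zip_eq_some.mpr ⟨hb, by rw [List.getElem?_replicate, if_pos hib]⟩)

lemma reduce_map_some (col : List Λ) : (col.map some).reduceOption = col := by
  induction col with
  | nil => simp
  | cons c t ih => simp [ih]

lemma ecolinv (c : List Λ) :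
    ((((none : Option Λ) :: (c.map some ++ [none])).tail).dropLast).reduceOption = c := by
  rw [List.tail_cons, List.dropLast_concat, reduce_map_some]

def Gdef (S : TilingSystem A Λ) [Fintype Λ] : RationalGraph A (Option Λ) :=
  ⟨fun a => Tdef S a⟩

def Iset (Λ : Type) : Set (List (Option Λ)) := {l | ∀ x ∈ l, x = none}

lemma lang_sup (S : TilingSystem A Λ) [Fintype Λ] :
    S.Lang ⊆ (Gdef S).Lang (Iset Λ) (Fset S) := by
  rintro w ⟨rows, n, ⟨hn, hm, hlenr, hrl, htiles⟩, hhead⟩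
  obtain ⟨a0, w0, hw0⟩ : ∃ a0 w0, w = a0 :: w0 := by
    cases w with
    | nil => simp at hm
    | cons a w' => exact ⟨a, w', rfl⟩
  obtain ⟨r0, rows', hrows0⟩ : ∃ r0 rows', rows = r0 :: rows' := by
    cases rows with
    | nil => simp at hlenr; omega
    | cons r0 rows' => exact ⟨r0, rows', rfl⟩
  have hr0w : r0 = w.map S.emb := by
    rw [hrows0] at hhead
    exact Option.some_inj.mp hhead
  refine ⟨(List.range (w.length+1)).map (fun j => ecol rows j), ecol rows 0,
    ecol rows w.length, ⟨by simp, ?_⟩, ?_, ?_, ?_, ?_⟩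
  · intro k a u v hw hu hv
    have hk : k < w.length := by
      obtain ⟨hh, -⟩ := List.getElem?_eq_some_iff.mp hw; exact hh
    rw [List.getElem?_map, List.getElem?_range (by omega)] at hu
    rw [List.getElem?_map, List.getElem?_range (by omega)] at hv
    obtain rfl : ecol rows k = u := Option.some_inj.mp hu
    obtain rfl : ecol rows (k+1) = v := Option.some_inj.mp hv
    show (Tdef S a).Accepts (ecol rows k) (ecol rows (k+1))
    apply spec_to_accepts
    have ha : (w.map S.emb).getD k (S.emb a) = S.emb a := by
      rw [List.getD_eq_getElem?_getD, List.getElem?_map, hw]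
      rfl
    refine ⟨by simp [ecol_length], ⟨rows.map (fun r => r.getD k (S.emb a)), ?_, ?_⟩,
      tiles_to_chain S rows hrl htiles (by omega)⟩
    · rw [hrows0, List.map_cons, List.head?_cons, hr0w, ha]
    · show (none : Option Λ) :: (rows.map (fun r => r[k]?) ++ [none]) = _
      rw [List.map_map]
      congr 2
      apply List.map_congr_left
      intro r hr
      have hkr : k < r.length := by rw [hrl r hr]; exact hk
      rw [List.getElem?_eq_getElem hkr]
      simp [Function.comp, List.getD_eq_getElem _ _ hkr, List.getElem?_eq_getElem hkr]
  · rw [List.head?_eq_getElem?, List.getElem?_map, List.getElem?_range (by omega)]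
    rfl
  · intro x hx
    rw [ecol_zero] at hx
    exact (List.mem_replicate.mp hx).2
  · rw [List.getLast?_eq_getElem?]
    simp only [List.length_map, List.length_range, Nat.add_sub_cancel]
    rw [List.getElem?_map, List.getElem?_range (by omega)]
    rfl
  · obtain ⟨t, htm⟩ : ∃ t, w.length = t + 1 := ⟨w.length - 1, by omega⟩
    rw [htm]
    have htr0 : t < r0.length := by
      rw [hrl r0 (by rw [hrows0]; exact List.mem_cons_self), htm]
      omega
    refine ⟨r0.getD t (S.emb a0), rows'.map (fun r => r.getD t (S.emb a0)), ?_, ?_⟩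
    · show (none : Option Λ) :: (rows.map (fun r => r[t]?) ++ [none]) = _
      rw [hrows0, List.map_cons, List.map_cons, List.map_map]
      congr 2
      rw [List.getElem?_eq_getElem htr0, List.getD_eq_getElem _ _ htr0]
      congr 1
      apply List.map_congr_left
      intro r hr
      have hkr : t < r.length := by
        rw [hrl r (by rw [hrows0]; exact List.mem_cons_of_mem _ hr), htm]
        omega
      rw [List.getElem?_eq_getElem hkr]
      simp [Function.comp, List.getD_eq_getElem _ _ hkr, List.getElem?_eq_getElem hkr]
    · rw [← htm, chain_rb_iff S _ (ecol_length rows w.length)]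
      have hc := tiles_to_chain S rows hrl htiles (le_refl w.length)
      rwa [ecol_of_ge rows hrl (le_refl w.length)] at hc

lemma lang_sub (S : TilingSystem A Λ) [Fintype Λ] :
    (Gdef S).Lang (Iset Λ) (Fset S) ⊆ S.Lang := by
  rintro w ⟨vs, i0, f0, ⟨hlenvs, hedges⟩, hhead, hI, hlast, hF⟩
  rcases w with _ | ⟨a0, w0⟩
  · exfalso
    have hlen1 : vs.length = 1 := by simpa using hlenvs
    have hv0 : vs[0]? = some i0 := by rw [← List.head?_eq_getElem?]; exact hhead
    have hvl : vs[0]? = some f0 := by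
      rw [List.getLast?_eq_getElem?, hlen1] at hlast
      exact hlast
    have hif : i0 = f0 := by
      rw [hv0] at hvl
      exact Option.some_inj.mp hvl
    obtain ⟨μ, cs, hsh, -⟩ := hF
    have hmem : some μ ∈ i0 := by rw [hif, hsh]; simp
    exact Option.some_ne_none μ (hI (some μ) hmem)
  · set m : ℕ := w0.length + 1 with hmdef
    have hml : (a0 :: w0).length = m := by rw [hmdef]; rfl
    rw [hml] at hlenvs
    set V : ℕ → List (Option Λ) := fun k => vs.getD k [] with hVdef
    have hVk : ∀ k, k < m + 1 → vs[k]? = some (V k) := by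
      intro k hk
      have hkl : k < vs.length := by omega
      rw [List.getElem?_eq_getElem hkl]
      simp [hVdef, List.getD_eq_getElem _ _ hkl, List.getElem?_eq_getElem hkl]
    set W : ℕ → A := fun k => (a0 :: w0).getD k a0 with hWdef
    have hW : ∀ k, k < m → (a0 :: w0)[k]? = some (W k) := by
      intro k hk
      have hkl : k < (a0 :: w0).length := by omega
      rw [List.getElem?_eq_getElem hkl]
      simp [hWdef, List.getD_eq_getElem _ _ hkl, List.getElem?_eq_getElem hkl]
    have hspec : ∀ k, k < m → EdgeSpec S (W k) (V k) (V (k+1)) := by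
      intro k hk
      exact accepts_to_spec S (W k)
        (hedges k (W k) (V k) (V (k+1)) (hW k hk) (hVk k (by omega)) (hVk (k+1) (by omega)))
    set col : ℕ → List Λ := fun k => ((V (k+1)).tail.dropLast).reduceOption with hcoldef
    have hcol : ∀ k, k < m → (col k).head? = some (S.emb (W k)) ∧
        V (k+1) = none :: ((col k).map some ++ [none]) := by
      intro k hk
      obtain ⟨c, hc1, hc2⟩ := (hspec k hk).2.1
      have hcc : col k = c := by rw [hcoldef]; simp only; rw [hc2, ecolinv]
      rw [hcc]
      exact ⟨hc1, hc2⟩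
    have hV0 : V 0 = i0 := by
      have h0 := hVk 0 (by omega)
      rw [← List.head?_eq_getElem?, hhead] at h0
      exact (Option.some_inj.mp h0).symm
    set K : ℕ := i0.length with hKdef
    have hVlen : ∀ k, k ≤ m → (V k).length = K := by
      intro k
      induction k with
      | zero => intro _; rw [hV0]
      | succ k ih =>
        intro hk
        rw [← (hspec k (by omega)).1]
        exact ih (by omega)
    have hVm : V m = f0 := by
      have h1 := hVk m (by omega)
      rw [List.getLast?_eq_getElem?, hlenvs, Nat.add_sub_cancel, h1] at hlast
      exact Option.some_inj.mp hlast
    have hcollen : ∀ k, k < m → (col k).length + 2 = K := by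
      intro k hk
      have h2 := (hcol k hk).2
      have hl := hVlen (k+1) (by omega)
      rw [h2] at hl
      simpa using hl
    have hK2 : 2 < K := by
      have hne : col 0 ≠ [] := by
        intro h
        have := (hcol 0 (by omega)).1
        rw [h] at this
        simp at this
      have : 0 < (col 0).length := List.length_pos_iff.mpr hne
      have := hcollen 0 (by omega)
      omega
    set n : ℕ := K - 2 with hndef
    have hn : 0 < n := by omega
    have hcoln : ∀ k, k < m → (col k).length = n := by
      intro k hk
      have := hcollen k hk
      omega
    set rows : List (List Λ) :=
      (List.range n).map (fun i => (List.range m).map (fun k => (col k).getD i (S.emb a0)))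
      with hrowsdef
    have hrowslen : rows.length = n := by simp [hrowsdef]
    have hrl : ∀ r ∈ rows, r.length = m := by
      intro r hr
      obtain ⟨i, -, rfl⟩ := List.mem_map.mp hr
      simp
    have hrowcol : ∀ t, t < m → rows.map (fun r => r[t]?) = (col t).map some := by
      intro t ht
      rw [hrowsdef, List.map_map]
      have hfun : ((fun r => r[t]?) ∘ fun i => (List.range m).map fun k => (col k).getD i (S.emb a0))
          = fun i => some ((col t).getD i (S.emb a0)) := by
        funext i
        simp only [Function.comp]
        rw [List.getElem?_map, List.getElem?_range ht]
        rfl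
      rw [hfun,
        show (fun i => some ((col t).getD i (S.emb a0))) =
          some ∘ (fun i => (col t).getD i (S.emb a0)) from rfl,
        ← List.map_map, map_range_getD (hcoln t ht)]
    have hecol : ∀ j, j ≤ m → ecol rows j = V j := by
      intro j hj
      rcases j with _ | t
      · rw [ecol_zero, hrowslen, hV0]
        symm
        rw [List.eq_replicate_iff]
        refine ⟨by omega, hI⟩
      · rw [show ecol rows (t+1) = none :: (rows.map (fun r => r[t]?) ++ [none]) from rfl,
          hrowcol t (by omega), ← (hcol t (by omega)).2]
    refine ⟨rows, n, ⟨hn, by simp, hrowslen, by rw [hml]; exact hrl, ?_⟩, ?_⟩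
    · rw [hml]
      apply chain_to_tiles S rows hrl
      intro j hj
      rcases lt_or_ge j m with hjm | hjm
      · rw [hecol j (by omega), hecol (j+1) (by omega)]
        exact (hspec j hjm).2.2
      · obtain rfl : j = m := by omega
        rw [hecol m (le_refl m), ecol_of_ge rows hrl (le_refl m), hVm, hrowslen]
        have hf0K : f0.length = K := by rw [← hVm]; exact hVlen m (le_refl m)
        have hf0len : f0.length = n + 2 := by omega
        refine (chain_rb_iff S f0 hf0len).mp ?_
        obtain ⟨μ, cs, hsh, hch⟩ := hF
        exact hch
    · have hrows0 : rows.head? =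
          some ((List.range m).map (fun k => (col k).getD 0 (S.emb a0))) := by
        rw [hrowsdef, List.head?_eq_getElem?, List.getElem?_map, List.getElem?_range (by omega)]
        rfl
      rw [hrows0]
      congr 1
      apply List.ext_getElem?
      intro k
      rw [List.getElem?_map, List.getElem?_map]
      rcases lt_or_ge k m with hk | hk
      · rw [List.getElem?_range hk, hW k hk]
        simp only [Option.map_some]
        congr 1
        have h0 := (hcol k hk).1
        rw [List.getD_eq_getElem?_getD, ← List.head?_eq_getElem?, h0]
        rfl
      · rw [List.getElem?_eq_none (by simpa using hk),
          List.getElem?_eq_none (by rw [hml]; exact hk)]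
        rfl

end CM

/-- Given a tiling system `S`, there exist a synchronous rational graph
`G` and two rational sets `I` and `F` of vertices such that `L(G,I,F) = L(S)`. -/
theorem tilingSystem_to_synchronous {A Λ : Type} [Fintype A] [Fintype Λ]
    (S : TilingSystem A Λ) :
    ∃ (Γ : Type) (_ : Fintype Γ) (G : RationalGraph A Γ) (I F : Set (List Γ)),
      G.Synchronous ∧ Regular I ∧ Regular F ∧ G.Lang I F = S.Lang := by
  refine ⟨Option Λ, inferInstance, CM.Gdef S, CM.Iset Λ, CM.Fset S, ?_, ?_, ?_, ?_⟩
  · intro a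
    exact CM.tdef_synchronous S a
  · exact ⟨Bool, inferInstance, CM.Idfa Λ, CM.Idfa_accepts Λ⟩
  · exact ⟨CM.QF Λ, inferInstance, CM.Fdfa S, CM.Fdfa_accepts S⟩
  · exact Set.Subset.antisymm (CM.lang_sub S) (CM.lang_sup S)
end

section
/- For every synchronous rational graph G, every single vertex i, and every rational set F of vertices, the set of vertices of G reachable from i is finite, and the path language L(G,{i},F) is a rational (regular) language. -/
/-! ### Auxiliary lemmas -/

section Aux

variable {A Γ : Type}

lemma sync_path_some {T : Transducer Γ} (hT : T.Synchronous) :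
    ∀ {q q' : T.Q} {ls : List (Option Γ × Option Γ)}, T.Path q ls q' →
      ∀ l ∈ ls, l.1.isSome ∧ l.2.isSome := by
  intro q q' ls h
  induction h with
  | nil => simp
  | cons ht _ ih =>
    intro l hl
    rcases List.mem_cons.mp hl with rfl | hl
    · exact hT _ _ _ ht
    · exact ih l hl

lemma ins_length {ls : List (Option Γ × Option Γ)}
    (h : ∀ l ∈ ls, l.1.isSome) : (Transducer.ins ls).length = ls.length := by
  induction ls with
  | nil => rfl
  | cons l ls ih =>
    have h1 : l.1.isSome := h l List.mem_cons_self
    obtain ⟨x, hx⟩ := Option.isSome_iff_exists.mp h1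
    have ih' := ih fun l hl => h l (List.mem_cons_of_mem _ hl)
    simp [Transducer.ins, hx] at ih' ⊢
    simpa [Transducer.ins] using ih'

lemma outs_length {ls : List (Option Γ × Option Γ)}
    (h : ∀ l ∈ ls, l.2.isSome) : (Transducer.outs ls).length = ls.length := by
  induction ls with
  | nil => rfl
  | cons l ls ih =>
    have h1 : l.2.isSome := h l List.mem_cons_self
    obtain ⟨x, hx⟩ := Option.isSome_iff_exists.mp h1
    have ih' := ih fun l hl => h l (List.mem_cons_of_mem _ hl)
    simp [Transducer.outs, hx] at ih' ⊢
    simpa [Transducer.outs] using ih' 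

lemma edge_length {G : RationalGraph A Γ} (hG : G.Synchronous) {u v : List Γ} {a : A}
    (h : G.Edge u a v) : u.length = v.length := by
  obtain ⟨q, ls, hp, _, hu, hv⟩ := h
  have hs := sync_path_some (hG a) hp
  rw [← hu, ← hv, ins_length (fun l hl => (hs l hl).1), outs_length (fun l hl => (hs l hl).2)]

/-- Walks in a rational graph, cons-style. -/
inductive GWalk (G : RationalGraph A Γ) : List Γ → List A → List Γ → Prop
  | nil (u : List Γ) : GWalk G u [] u
  | cons {u v w : List Γ} {a : A} {ls : List A} :
      G.Edge u a v → GWalk G v ls w → GWalk G u (a :: ls) w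

lemma gwalk_length {G : RationalGraph A Γ} (hG : G.Synchronous) {u w : List Γ} {ls : List A}
    (h : GWalk G u ls w) : u.length = w.length := by
  induction h with
  | nil => rfl
  | cons he _ ih => exact (edge_length hG he).trans ih

lemma isPath_singleton {G : RationalGraph A Γ} (u : List Γ) : G.IsPath [u] [] := by
  refine ⟨rfl, fun k a x y hw _ _ => ?_⟩
  simp at hw

lemma isPath_cons {G : RationalGraph A Γ} {u v : List Γ} {vs : List (List Γ)} {a : A}
    {w : List A} (he : G.Edge u a v) (hp : G.IsPath (v :: vs) w) :
    G.IsPath (u :: v :: vs) (a :: w) := by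
  refine ⟨by simpa using hp.1, fun k b x y hw hx hy => ?_⟩
  cases k with
  | zero =>
    have hb : b = a := by simpa using hw.symm
    have hxu : x = u := by simpa using hx.symm
    have hyv : y = v := by simpa using hy.symm
    subst hb; subst hxu; subst hyv; exact he
  | succ k =>
    simp only [List.getElem?_cons_succ] at hw hx hy
    exact hp.2 k b x y hw hx (by simpa using hy)

lemma walk_of_isPath {G : RationalGraph A Γ} :
    ∀ {w : List A} {vs : List (List Γ)} {u f : List Γ}, G.IsPath vs w →
      vs.head? = some u → vs.getLast? = some f → GWalk G u w f := by
  intro w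
  induction w with
  | nil =>
    intro vs u f hp hh hl
    have hlen : vs.length = 1 := by simpa using hp.1
    match vs, hlen with
    | [x], _ =>
      simp only [List.head?_cons, Option.some.injEq] at hh
      simp only [List.getLast?_singleton, Option.some.injEq] at hl
      subst hh; subst hl; exact GWalk.nil _
  | cons a w ih =>
    intro vs u f hp hh hl
    have hlen : vs.length = w.length + 2 := by
      have := hp.1; simp at this; omega
    obtain ⟨x, y, vs', rfl⟩ : ∃ x y vs', vs = x :: y :: vs' := by
      match vs, hlen with
      | x :: y :: vs', _ => exact ⟨x, y, vs', rfl⟩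
    have hxu : x = u := by simpa using hh
    subst hxu
    have he : G.Edge x a y := hp.2 0 a x y (by simp) (by simp) (by simp)
    have hp' : G.IsPath (y :: vs') w := by
      refine ⟨by simpa using hlen, fun k b p q hw hx hy => ?_⟩
      exact hp.2 (k + 1) b p q (by simpa [List.getElem?_cons_succ]) (by simpa [List.getElem?_cons_succ]) (by simpa [List.getElem?_cons_succ] using hy)
    have hl' : (y :: vs').getLast? = some f := by
      rwa [List.getLast?_cons_cons] at hl
    exact GWalk.cons he (ih hp' rfl hl')

lemma isPath_of_walk {G : RationalGraph A Γ} {u f : List Γ} {w : List A}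
    (h : GWalk G u w f) :
    ∃ vs, G.IsPath vs w ∧ vs.head? = some u ∧ vs.getLast? = some f := by
  induction h with
  | nil u => exact ⟨[u], isPath_singleton u, rfl, rfl⟩
  | cons he _ ih =>
    obtain ⟨vs, hp, hh, hl⟩ := ih
    match vs, hh with
    | v :: vs', hh =>
      simp only [List.head?_cons, Option.some.injEq] at hh
      subst hh
      exact ⟨_ :: _ :: vs', isPath_cons he hp, rfl, by rwa [List.getLast?_cons_cons]⟩

lemma lang_eq_walk {G : RationalGraph A Γ} {i : List Γ} {F : Set (List Γ)} :
    G.Lang {i} F = { w | ∃ f, GWalk G i w f ∧ f ∈ F } := by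
  ext w
  constructor
  · rintro ⟨vs, i', f, hp, hh, hi, hl, hf⟩
    rcases hi with rfl
    exact ⟨f, walk_of_isPath hp hh hl, hf⟩
  · rintro ⟨f, hw, hf⟩
    obtain ⟨vs, hp, hh, hl⟩ := isPath_of_walk hw
    exact ⟨vs, i, f, hp, hh, rfl, hl, hf⟩

lemma gwalk_nil_eq {G : RationalGraph A Γ} {u v : List Γ} (h : GWalk G u [] v) : u = v := by
  cases h; rfl

lemma gwalk_cons_iff {G : RationalGraph A Γ} {u v : List Γ} {a : A} {w : List A} :
    GWalk G u (a :: w) v ↔ ∃ x, G.Edge u a x ∧ GWalk G x w v := by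
  constructor
  · intro h; cases h with | cons he hw => exact ⟨_, he, hw⟩
  · rintro ⟨x, he, hw⟩; exact GWalk.cons he hw

end Aux

/-- For every synchronous rational graph `G`, single vertex `i` and
rational set `F`, the set of vertices reachable from `i` is finite and the path
language `L(G,{i},F)` is regular. -/
theorem synchronous_from_single_vertex_regular {A Γ : Type} [Fintype A] [Fintype Γ]
    (G : RationalGraph A Γ) (hG : G.Synchronous) (i : List Γ) (F : Set (List Γ))
    (hF : Regular F) :
    { v : List Γ | Relation.ReflTransGen (fun u v => ∃ a, G.Edge u a v) i v }.Finite ∧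
      Regular (G.Lang {i} F) := by
  have hlen_reach : ∀ v, Relation.ReflTransGen (fun u v => ∃ a, G.Edge u a v) i v →
      v.length = i.length := by
    intro v h
    induction h with
    | refl => rfl
    | tail _ hbc ih =>
      obtain ⟨a, he⟩ := hbc
      exact (edge_length hG he).symm.trans ih
  refine ⟨(List.finite_length_eq Γ i.length).subset fun v hv => hlen_reach v hv, ?_⟩
  set V : Set (List Γ) := {v : List Γ | v.length = i.length} with hV
  haveI : Finite ↥V := (List.finite_length_eq Γ i.length).to_subtype
  have hiV : i ∈ V := rfl
  let M : NFA A ↥V :=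
    { step := fun q a => {q' | G.Edge q.1 a q'.1}
      start := {⟨i, hiV⟩}
      accept := {q | q.1 ∈ F} }
  have heval : ∀ (w : List A) (S : Set ↥V) (q : ↥V),
      q ∈ M.evalFrom S w ↔ ∃ s ∈ S, GWalk G s.1 w q.1 := by
    intro w
    induction w with
    | nil =>
      intro S q
      rw [NFA.evalFrom_nil]
      constructor
      · intro h; exact ⟨q, h, GWalk.nil _⟩
      · rintro ⟨s, hs, hw⟩
        have := gwalk_nil_eq hw
        have hsq : s = q := Subtype.ext this
        rw [← hsq]; exact hs
    | cons a w ih =>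
      intro S q
      have hstep : M.evalFrom S (a :: w) = M.evalFrom (M.stepSet S a) w := rfl
      rw [hstep, ih]
      constructor
      · rintro ⟨s', hs', hw⟩
        obtain ⟨s, hs, hstep⟩ := M.mem_stepSet.mp hs'
        exact ⟨s, hs, GWalk.cons hstep hw⟩
      · rintro ⟨s, hs, hw⟩
        obtain ⟨x, he, hw'⟩ := gwalk_cons_iff.mp hw
        have hxV : x ∈ V := by
          show x.length = i.length
          rw [← edge_length hG he, s.2]
        refine ⟨⟨x, hxV⟩, M.mem_stepSet.mpr ⟨s, hs, he⟩, hw'⟩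
  have haccepts : M.accepts = G.Lang {i} F := by
    rw [lang_eq_walk]
    ext w
    rw [NFA.mem_accepts]
    constructor
    · rintro ⟨q, hqF, hq⟩
      obtain ⟨s, hs, hw⟩ := (heval w _ q).mp hq
      rcases hs with rfl
      exact ⟨q.1, hw, hqF⟩
    · rintro ⟨f, hw, hf⟩
      have hfV : f ∈ V := by
        show f.length = i.length
        exact (gwalk_length hG hw).symm
      exact ⟨⟨f, hfV⟩, hf, (heval w _ _).mpr ⟨⟨i, hiV⟩, rfl, hw⟩⟩
  exact ⟨Set ↥V, Fintype.ofFinite _, M.toDFA, by rw [NFA.toDFA_correct]; exact haccepts⟩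
end

section
/- For any tiling system S = (Γ,Σ,#,Δ) and any picture p ∈ P(S) of width m, there exists an (n,m)-picture p' ∈ P(S) such that fr(p) = fr(p') and n ≤ |Γ|^m. -/
section AuxLemmas

variable {Λ' : Type}

lemma tilesOf_pair_subset {a b : List Λ'} {L : List (List Λ')} {i : ℕ}
    (ha : L[i]? = some a) (hb : L[i + 1]? = some b) : tilesOf [a, b] ⊆ tilesOf L := by
  rintro t ⟨i', j, r₁, r₂, h1, h2, h3, h4, h5, h6⟩
  match i' with
  | 0 =>
    simp only [List.getElem?_cons_zero, Option.some.injEq] at h1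
    simp only [List.getElem?_cons_succ, List.getElem?_cons_zero, Option.some.injEq] at h2
    subst h1; subst h2
    exact ⟨i, j, a, b, ha, hb, h3, h4, h5, h6⟩
  | n + 1 =>
    simp at h2

lemma tilesOf_subset_iff {L : List (List Λ')} {T : Set (Tile Λ')} :
    tilesOf L ⊆ T ↔ L.Chain' (fun a b => tilesOf [a, b] ⊆ T) := by
  constructor
  · intro h
    unfold List.Chain'
    rw [List.isChain_iff_getElem]
    intro i hi
    refine (tilesOf_pair_subset (i := i) ?_ ?_).trans h
    · rw [List.getElem?_eq_getElem (by omega)]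
    · rw [List.getElem?_eq_getElem (by omega)]
  · intro h t ⟨i, j, r₁, r₂, h1, h2, h3, h4, h5, h6⟩
    unfold List.Chain' at h
    rw [List.isChain_iff_getElem] at h
    have hi2 : i + 1 < L.length := by
      by_contra hc
      rw [List.getElem?_eq_none (by omega)] at h2
      exact nomatch h2
    have hi : i < L.length - 1 := by omega
    have := h i hi2
    change tilesOf [L.get ⟨i, by omega⟩, L.get ⟨i + 1, by omega⟩] ⊆ T at this
    have e1 : L.get ⟨i, by omega⟩ = r₁ := by
      have := List.getElem?_eq_getElem (l := L) (i := i) (by omega)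
      rw [h1] at this; exact (Option.some.injEq _ _ ▸ this).symm
    have e2 : L.get ⟨i + 1, by omega⟩ = r₂ := by
      have := List.getElem?_eq_getElem (l := L) (i := i + 1) (by omega)
      rw [h2] at this; exact (Option.some.injEq _ _ ▸ this).symm
    rw [e1, e2] at this
    exact this ⟨0, j, r₁, r₂, rfl, rfl, h3, h4, h5, h6⟩

lemma chain'_splice {α : Type} {R : α → α → Prop} {l mid r : List α} {x : α}
    (h : List.Chain' R (l ++ x :: (mid ++ x :: r))) : List.Chain' R (l ++ x :: r) := by
  unfold List.Chain' at h ⊢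
  rw [List.isChain_split] at h ⊢
  refine ⟨h.1, ?_⟩
  have h2 := h.2
  rw [show x :: (mid ++ x :: r) = (x :: mid) ++ x :: r from rfl, List.isChain_split] at h2
  exact h2.2

lemma duplicate_decomp {α : Type} {x : α} {l : List α} (h : List.Duplicate x l) :
    ∃ l₁ l₂ l₃ : List α, l = l₁ ++ x :: (l₂ ++ x :: l₃) := by
  induction h with
  | cons_mem hx =>
    obtain ⟨s, t, rfl⟩ := List.append_of_mem hx
    exact ⟨[], s, t, rfl⟩
  | @cons_duplicate y l' _ ih =>
    obtain ⟨l₁, l₂, l₃, rfl⟩ := ih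
    exact ⟨y :: l₁, l₂, l₃, rfl⟩

lemma length_le_of_nodup {Λ : Type} [Fintype Λ] {rows : List (List Λ)} {m : ℕ}
    (hrl : ∀ r ∈ rows, r.length = m) (hnd : rows.Nodup) :
    rows.length ≤ Fintype.card Λ ^ m := by
  match rows with
  | [] => simp
  | r :: rs =>
    rcases Nat.eq_zero_or_pos m with hm | hm
    · subst hm
      have hall : ∀ s ∈ r :: rs, s = [] := by
        intro s hs; exact List.eq_nil_of_length_eq_zero (hrl s hs)
      have : rs = [] := by
        rcases rs with _ | ⟨s, _⟩
        · rfl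
        · exfalso
          have h1 : r = [] := hall r (by simp)
          have h2 : s = [] := hall s (by simp)
          have := hnd
          rw [List.nodup_cons] at this
          exact this.1 (by simp [h1, h2])
      simp [this]
    · have hrlen : r.length = m := hrl r (by simp)
      have hrne : r ≠ [] := by
        intro hr; rw [hr] at hrlen; simp at hrlen; omega
      obtain ⟨d, r', rfl⟩ : ∃ d r', r = d :: r' := by
        rcases r with _ | ⟨d, r'⟩
        · exact absurd rfl hrne
        · exact ⟨d, r', rfl⟩
      set rows := (d :: r') :: rs with hrows
      let f : List Λ → (Fin m → Λ) := fun l i => l.getD i d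
      have hinj : ∀ x ∈ rows, ∀ y ∈ rows, f x = f y → x = y := by
        intro x hx y hy hfxy
        have hxl : x.length = m := hrl x hx
        have hyl : y.length = m := hrl y hy
        apply List.ext_getElem (by omega)
        intro i h1 h2
        have hi : i < m := by omega
        have := congrFun hfxy ⟨i, hi⟩
        simpa [f, List.getD_eq_getElem?_getD, List.getElem?_eq_getElem h1,
          List.getElem?_eq_getElem h2] using this
      have hmapnd : (rows.map f).Nodup := hnd.map_on hinj
      have := hmapnd.length_le_card
      rwa [List.length_map, Fintype.card_fun, Fintype.card_fin] at this

lemma pic_splice {A Λ : Type} (S : TilingSystem A Λ) {l mid r : List (List Λ)}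
    {x : List Λ} {m : ℕ}
    (h : S.Pic (l ++ x :: (mid ++ x :: r)) (l ++ x :: (mid ++ x :: r)).length m) :
    S.Pic (l ++ x :: r) (l ++ x :: r).length m := by
  obtain ⟨hn, hm, -, hrl, ht⟩ := h
  refine ⟨by simp, hm, rfl, ?_, ?_⟩
  · intro s hs
    apply hrl
    simp only [List.mem_append, List.mem_cons] at hs ⊢
    tauto
  · rw [tilesOf_subset_iff] at ht ⊢
    set F : List (Option Λ) := List.replicate (m + 2) none with hF
    set g : List Λ → List (Option Λ) := fun s => none :: (s.map some ++ [none]) with hg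
    have e1 : framed (l ++ x :: (mid ++ x :: r)) m =
        (F :: l.map g) ++ g x :: (mid.map g ++ g x :: (r.map g ++ [F])) := by
      simp [framed, F, g]
    have e2 : framed (l ++ x :: r) m = (F :: l.map g) ++ g x :: (r.map g ++ [F]) := by
      simp [framed, F, g]
    rw [e1] at ht
    rw [e2]
    exact chain'_splice ht

lemma head?_splice {α : Type} (l mid r : List α) (x : α) :
    (l ++ x :: r).head? = (l ++ x :: (mid ++ x :: r)).head? := by
  cases l <;> simp

lemma pic_aux {A Λ : Type} [Fintype Λ] (S : TilingSystem A Λ) (m : ℕ) :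
    ∀ (N : ℕ) (rows : List (List Λ)), rows.length ≤ N → S.Pic rows rows.length m →
    ∃ rows', S.Pic rows' rows'.length m ∧ rows'.head? = rows.head? ∧
      rows'.length ≤ Fintype.card Λ ^ m := by
  intro N
  induction N with
  | zero =>
    intro rows hle hp
    have := hp.1
    omega
  | succ N ih =>
    intro rows hle hp
    by_cases hb : rows.length ≤ Fintype.card Λ ^ m
    · exact ⟨rows, hp, rfl, hb⟩
    · have hnd : ¬ rows.Nodup := fun hnd =>
        hb (length_le_of_nodup hp.2.2.2.1 hnd)
      obtain ⟨x, hx⟩ := List.exists_duplicate_iff_not_nodup.2 hnd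
      obtain ⟨l, mid, r, rfl⟩ := duplicate_decomp hx
      have hp' := pic_splice S hp
      have hlt : (l ++ x :: r).length ≤ N := by
        simp only [List.length_append, List.length_cons] at hle ⊢
        omega
      obtain ⟨rows', h1, h2, h3⟩ := ih (l ++ x :: r) hlt hp'
      exact ⟨rows', h1, h2.trans (head?_splice l mid r x), h3⟩

/-- For any tiling system `S` and any picture `p ∈ P(S)` of width `m`,
there exists an `(n,m)`-picture `p' ∈ P(S)` with the same frontier and `n ≤ |Λ|^m`. -/
theorem tiling_picture_height_bound {A Λ : Type} [Fintype A] [Fintype Λ]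
    (S : TilingSystem A Λ) (rows : List (List Λ)) (n m : ℕ) (h : S.Pic rows n m) :
    ∃ (rows' : List (List Λ)) (n' : ℕ), S.Pic rows' n' m ∧
      rows'.head? = rows.head? ∧ n' ≤ Fintype.card Λ ^ m := by
  have hlen : rows.length = n := h.2.2.1
  subst hlen
  obtain ⟨rows', h1, h2, h3⟩ := pic_aux S m rows.length rows le_rfl h
  exact ⟨rows', rows'.length, h1, h2, h3⟩
end AuxLemmas
end
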